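/- arXiv:2501.08938 — 8 statements merged into one kernel-verified Lean document; each statement's English description precedes it below -/
import Mathlib

section
/- For every quasi-copula Q, the Hausdorff dimension of supp(Q) is at least 1. -/
open Set MeasureTheory

noncomputable section

/-- A (bivariate) quasi-copula on `[0,1]²`. -/
def IsQuasiCopula (Q : ℝ → ℝ → ℝ) : Prop :=
  (∀ u ∈ Icc (0:ℝ) 1, ∀ v ∈ Icc (0:ℝ) 1, Q u v ∈ Icc (0:ℝ) 1) ∧
  (∀ t ∈ Icc (0:ℝ) 1, Q t 0 = 0 ∧ Q 0 t = 0 ∧ Q t 1 = t ∧ Q 1 t = t) ∧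
  (∀ v ∈ Icc (0:ℝ) 1, ∀ u₁ ∈ Icc (0:ℝ) 1, ∀ u₂ ∈ Icc (0:ℝ) 1, u₁ ≤ u₂ → Q u₁ v ≤ Q u₂ v) ∧
  (∀ u ∈ Icc (0:ℝ) 1, ∀ v₁ ∈ Icc (0:ℝ) 1, ∀ v₂ ∈ Icc (0:ℝ) 1, v₁ ≤ v₂ → Q u v₁ ≤ Q u v₂) ∧
  (∀ u₁ ∈ Icc (0:ℝ) 1, ∀ v₁ ∈ Icc (0:ℝ) 1, ∀ u₂ ∈ Icc (0:ℝ) 1, ∀ v₂ ∈ Icc (0:ℝ) 1,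
    |Q u₁ v₁ - Q u₂ v₂| ≤ |u₁ - u₂| + |v₁ - v₂|)

/-- The `Q`-volume of the rectangle `[u₁,u₂] × [v₁,v₂]`. -/
def QVol (Q : ℝ → ℝ → ℝ) (u₁ u₂ v₁ v₂ : ℝ) : ℝ :=
  Q u₂ v₂ - Q u₂ v₁ - Q u₁ v₂ + Q u₁ v₁

/-- A copula: a quasi-copula all of whose rectangle volumes are nonnegative. -/
def IsCopula (C : ℝ → ℝ → ℝ) : Prop :=
  IsQuasiCopula C ∧
  ∀ u₁ u₂ v₁ v₂ : ℝ, u₁ ∈ Icc (0:ℝ) 1 → u₂ ∈ Icc (0:ℝ) 1 → v₁ ∈ Icc (0:ℝ) 1 →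
    v₂ ∈ Icc (0:ℝ) 1 → u₁ ≤ u₂ → v₁ ≤ v₂ → 0 ≤ QVol C u₁ u₂ v₁ v₂

/-- An interval of `[0,1]` which is open in the relative topology of `[0,1]`. -/
def IsRelOpenInterval (I : Set ℝ) : Prop :=
  I.OrdConnected ∧ ∃ U : Set ℝ, IsOpen U ∧ I = U ∩ Icc 0 1

/-- A rectangle `R = I₁ × I₂` (with `I₁, I₂` relatively open intervals of `[0,1]`) is
open `Q`-null if every closed rectangle contained in it has zero `Q`-volume. -/
def OpenQNull (Q : ℝ → ℝ → ℝ) (R : Set (ℝ × ℝ)) : Prop :=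
  (∃ I₁ I₂ : Set ℝ, IsRelOpenInterval I₁ ∧ IsRelOpenInterval I₂ ∧ R = I₁ ×ˢ I₂) ∧
  ∀ a₁ b₁ a₂ b₂ : ℝ, a₁ ≤ b₁ → a₂ ≤ b₂ → Icc a₁ b₁ ×ˢ Icc a₂ b₂ ⊆ R →
    QVol Q a₁ b₁ a₂ b₂ = 0

/-- The support of a quasi-copula: the complement in `[0,1]²` of the union of all
open `Q`-null rectangles. -/
def suppQ (Q : ℝ → ℝ → ℝ) : Set (ℝ × ℝ) :=
  (Icc (0:ℝ) 1 ×ˢ Icc (0:ℝ) 1) \ ⋃₀ {R | OpenQNull Q R}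

/-- `p_k`: the sum of the entries of the first `k` columns of `T` (column index first). -/
def colPart {m : ℕ} (T : Fin m → Fin m → ℝ) (k : ℕ) : ℝ :=
  ∑ i ∈ Finset.univ.filter (fun i : Fin m => (i : ℕ) < k), ∑ j, T i j

/-- `q_k`: the sum of the entries of the first `k` rows of `T` (rows ordered bottom-to-top). -/
def rowPart {m : ℕ} (T : Fin m → Fin m → ℝ) (k : ℕ) : ℝ :=
  ∑ j ∈ Finset.univ.filter (fun j : Fin m => (j : ℕ) < k), ∑ i, T i j

/-- A quasi-transformation matrix. -/
def IsQTMatrix {m : ℕ} (T : Fin m → Fin m → ℝ) : Prop :=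
  (∑ i, ∑ j, T i j = 1) ∧
  (∀ i, 0 < ∑ j, T i j) ∧
  (∀ j, 0 < ∑ i, T i j) ∧
  (∀ a b c d : ℕ, a ≤ b → b < m → c ≤ d → d < m →
    (a = 0 ∨ b = m - 1 ∨ c = 0 ∨ d = m - 1) →
    0 ≤ ∑ i ∈ Finset.univ.filter (fun i : Fin m => a ≤ (i : ℕ) ∧ (i : ℕ) ≤ b),
        ∑ j ∈ Finset.univ.filter (fun j : Fin m => c ≤ (j : ℕ) ∧ (j : ℕ) ≤ d), T i j)

/-- `F` is the `T`-transformation of the quasi-copula `Q`: on each associated rectangle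
`R_{ij} = [p_{i-1},p_i] × [q_{j-1},q_j]` (here `i j : Fin m` are zero-based, so the
rectangle is `[colPart T i, colPart T (i+1)] × [rowPart T j, rowPart T (j+1)]`),
`F` is given by the `T`-transformation formula. -/
def IsTTrans {m : ℕ} (T : Fin m → Fin m → ℝ) (Q F : ℝ → ℝ → ℝ) : Prop :=
  ∀ i j : Fin m, ∀ u v : ℝ,
    u ∈ Icc (colPart T (i : ℕ)) (colPart T ((i : ℕ) + 1)) →
    v ∈ Icc (rowPart T (j : ℕ)) (rowPart T ((j : ℕ) + 1)) →
    F u v =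
      (∑ i' ∈ Finset.univ.filter (fun i' : Fin m => i' < i),
        ∑ j' ∈ Finset.univ.filter (fun j' : Fin m => j' < j), T i' j')
      + (u - colPart T (i : ℕ)) / (colPart T ((i : ℕ) + 1) - colPart T (i : ℕ)) *
          (∑ j' ∈ Finset.univ.filter (fun j' : Fin m => j' < j), T i j')
      + (v - rowPart T (j : ℕ)) / (rowPart T ((j : ℕ) + 1) - rowPart T (j : ℕ)) *
          (∑ i' ∈ Finset.univ.filter (fun i' : Fin m => i' < i), T i' j)
      + T i j * Q ((u - colPart T (i : ℕ)) / (colPart T ((i : ℕ) + 1) - colPart T (i : ℕ)))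
          ((v - rowPart T (j : ℕ)) / (rowPart T ((j : ℕ) + 1) - rowPart T (j : ℕ)))

/-- The similarity `ω_{ij}` associated with the rectangle `R_{ij}` of `T`. -/
def omegaMap {m : ℕ} (T : Fin m → Fin m → ℝ) (i j : Fin m) : ℝ × ℝ → ℝ × ℝ :=
  fun p =>
    (colPart T (i : ℕ) + (colPart T ((i : ℕ) + 1) - colPart T (i : ℕ)) * p.1,
     rowPart T (j : ℕ) + (rowPart T ((j : ℕ) + 1) - rowPart T (j : ℕ)) * p.2)

/-- A similarity of the plane with ratio `c ∈ (0,1)` (Euclidean distance). -/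
def IsSimilarity2 (c : ℝ) (S : ℝ × ℝ → ℝ × ℝ) : Prop :=
  0 < c ∧ c < 1 ∧ ∀ x y : ℝ × ℝ,
    Real.sqrt (((S x).1 - (S y).1) ^ 2 + ((S x).2 - (S y).2) ^ 2) =
      c * Real.sqrt ((x.1 - y.1) ^ 2 + (x.2 - y.2) ^ 2)

/-- A self-similar subset of the plane. -/
def IsSelfSimilar2 (E : Set (ℝ × ℝ)) : Prop :=
  ∃ (k : ℕ) (S : Fin (k + 1) → ℝ × ℝ → ℝ × ℝ) (c : Fin (k + 1) → ℝ),
    (∀ j, IsSimilarity2 (c j) (S j)) ∧ E = ⋃ j, S j '' E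

end


private lemma fiber_meets_supp (Q : ℝ → ℝ → ℝ) (hQ : IsQuasiCopula Q)
    (u : ℝ) (hu : u ∈ Icc (0:ℝ) 1) : ∃ v : ℝ, (u, v) ∈ suppQ Q := by
  classical
  by_contra hcon
  push_neg at hcon
  -- every point of the fiber is in some open Q-null rectangle
  have hmem : ∀ v : Icc (0:ℝ) 1, ∃ R, OpenQNull Q R ∧ (u, (v:ℝ)) ∈ R := by
    intro v
    have h1 : ((u, (v:ℝ)) : ℝ × ℝ) ∈ Icc (0:ℝ) 1 ×ˢ Icc (0:ℝ) 1 := ⟨hu, v.2⟩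
    have h2 := hcon (v : ℝ)
    simp only [suppQ, mem_diff, not_and, not_not] at h2
    have h3 := h2 h1
    simpa [mem_sUnion] using h3
  choose R hR hmemR using hmem
  have hRdec : ∀ v : Icc (0:ℝ) 1, ∃ I₁ I₂ : Set ℝ,
      IsRelOpenInterval I₁ ∧ IsRelOpenInterval I₂ ∧ R v = I₁ ×ˢ I₂ := fun v => (hR v).1
  choose I₁ I₂ hI₁ hI₂ hReq using hRdec
  choose U₁ hU₁open hI₁eq using fun v => (hI₁ v).2
  choose U₂ hU₂open hI₂eq using fun v => (hI₂ v).2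
  -- compactness of the fiber gives a finite subcover
  have hK : IsCompact (({u} : Set ℝ) ×ˢ Icc (0:ℝ) 1) :=
    isCompact_singleton.prod isCompact_Icc
  have hcover : (({u} : Set ℝ) ×ˢ Icc (0:ℝ) 1) ⊆ ⋃ v : Icc (0:ℝ) 1, U₁ v ×ˢ U₂ v := by
    rintro ⟨x, w⟩ ⟨hx, hw⟩
    have hx' : x = u := hx
    rw [hx']
    refine mem_iUnion.2 ⟨⟨w, hw⟩, ?_⟩
    have h1 := hmemR ⟨w, hw⟩
    rw [hReq ⟨w, hw⟩] at h1
    have hu1 : u ∈ I₁ ⟨w, hw⟩ := h1.1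
    have hw1 : w ∈ I₂ ⟨w, hw⟩ := h1.2
    rw [hI₁eq] at hu1
    rw [hI₂eq] at hw1
    exact ⟨hu1.1, hw1.1⟩
  obtain ⟨t, ht⟩ := hK.elim_finite_subcover _
    (fun v => (hU₁open v).prod (hU₂open v)) hcover
  set t' : Finset (Icc (0:ℝ) 1) := t.filter (fun v => u ∈ I₁ v) with ht'def
  -- every w in [0,1] is covered by U₂ v for some relevant v
  have hA : ∀ w ∈ Icc (0:ℝ) 1, ∃ v ∈ t', w ∈ U₂ v := by
    intro w hw
    have h1 : ((u, w) : ℝ × ℝ) ∈ ({u} : Set ℝ) ×ˢ Icc (0:ℝ) 1 := ⟨rfl, hw⟩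
    have h2 := ht h1
    simp only [mem_iUnion] at h2
    obtain ⟨v, hvt, hv⟩ := h2
    refine ⟨v, Finset.mem_filter.2 ⟨hvt, ?_⟩, hv.2⟩
    rw [hI₁eq]
    exact ⟨hv.1, hu⟩
  -- a closed interval [a,b] ∋ u, contained in every relevant I₁
  have hUint : IsOpen (⋂ v ∈ t', U₁ v) := isOpen_biInter_finset (fun v _ => hU₁open v)
  have huUint : u ∈ ⋂ v ∈ t', U₁ v := by
    refine mem_iInter₂.2 (fun v hv => ?_)
    have h1 := (Finset.mem_filter.1 hv).2
    rw [hI₁eq] at h1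
    exact h1.1
  obtain ⟨ε, hε, hball⟩ := Metric.isOpen_iff.1 hUint u huUint
  set a : ℝ := max 0 (u - ε / 2) with hadef
  set b : ℝ := min 1 (u + ε / 2) with hbdef
  have ha0 : (0:ℝ) ≤ a := le_max_left _ _
  have hau : a ≤ u := max_le hu.1 (by linarith)
  have hub : u ≤ b := le_min hu.2 (by linarith)
  have hb1 : b ≤ 1 := min_le_left _ _
  have hab : a ≤ b := hau.trans hub
  have haltb : a < b :=
    max_lt (lt_min one_pos (by linarith [hu.1])) (lt_min (by linarith [hu.2]) (by linarith))
  have haI : a ∈ Icc (0:ℝ) 1 := ⟨ha0, hau.trans hu.2⟩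
  have hbI : b ∈ Icc (0:ℝ) 1 := ⟨hu.1.trans hub, hb1⟩
  have hIab : ∀ v ∈ t', Icc a b ⊆ I₁ v := by
    intro v hv x hx
    have hx1 : x ∈ Metric.ball u ε := by
      rw [Metric.mem_ball, Real.dist_eq, abs_lt]
      have h1 : x ≤ b := hx.2
      have h2 : a ≤ x := hx.1
      have h3 : b ≤ u + ε / 2 := min_le_right _ _
      have h4 : u - ε / 2 ≤ a := le_max_right _ _
      constructor <;> linarith
    have hx2 : x ∈ U₁ v := mem_iInter₂.1 (hball hx1) v hv
    rw [hI₁eq]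
    exact ⟨hx2, ⟨ha0.trans hx.1, hx.2.trans hb1⟩⟩
  -- Lebesgue number for the cover of [0,1] by the U₂'s
  have hcov2 : Icc (0:ℝ) 1 ⊆ ⋃ v : {v : Icc (0:ℝ) 1 // v ∈ t'}, U₂ v.1 := by
    intro w hw
    obtain ⟨v, hvt, hv⟩ := hA w hw
    exact mem_iUnion.2 ⟨⟨v, hvt⟩, hv⟩
  obtain ⟨δ, hδ, hδball⟩ := lebesgue_number_lemma_of_metric isCompact_Icc
    (fun v : {v : Icc (0:ℝ) 1 // v ∈ t'} => hU₂open v.1) hcov2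
  obtain ⟨n, hn⟩ := exists_nat_one_div_lt hδ
  set N : ℝ := (n : ℝ) + 1 with hNdef
  have hN0 : (0:ℝ) < N := by positivity
  -- each small rectangle has zero Q-volume
  have hzero : ∀ k ∈ Finset.range (n + 1),
      QVol Q a b ((k : ℝ) / N) (((k : ℝ) + 1) / N) = 0 := by
    intro k hk
    have hkn : (k : ℝ) ≤ (n : ℝ) := by
      exact_mod_cast Nat.lt_succ_iff.1 (Finset.mem_range.1 hk)
    have hk0 : (0:ℝ) ≤ (k : ℝ) / N := by positivity
    have hk1 : (k : ℝ) / N ≤ 1 := by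
      rw [div_le_one hN0]; linarith
    obtain ⟨v, hvball⟩ := hδball ((k : ℝ) / N) ⟨hk0, hk1⟩
    have hsub2 : Icc ((k : ℝ) / N) (((k : ℝ) + 1) / N) ⊆ I₂ v.1 := by
      intro x hx
      have hx1 : x ∈ Metric.ball ((k : ℝ) / N) δ := by
        rw [Metric.mem_ball, Real.dist_eq, abs_lt]
        have h1 : x ≤ ((k : ℝ) + 1) / N := hx.2
        have h2 : (k : ℝ) / N ≤ x := hx.1
        have h3 : ((k : ℝ) + 1) / N - (k : ℝ) / N = 1 / N := by ring
        have h4 : 1 / N < δ := hn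
        constructor <;> linarith
      have hx2 : x ∈ U₂ v.1 := hvball hx1
      rw [hI₂eq]
      refine ⟨hx2, ⟨hk0.trans hx.1, hx.2.trans ?_⟩⟩
      rw [div_le_one hN0]; linarith
    have hle2 : (k : ℝ) / N ≤ ((k : ℝ) + 1) / N := by
      gcongr
      linarith
    refine (hR v.1).2 a b ((k : ℝ) / N) (((k : ℝ) + 1) / N) hab hle2 ?_
    rw [hReq v.1]
    exact Set.prod_mono (hIab v.1 v.2) hsub2
  -- telescoping sum gives b - a = 0, contradiction
  set g : ℕ → ℝ := fun k => Q b ((k : ℝ) / N) - Q a ((k : ℝ) / N) with hgdef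
  have hterm : ∀ k : ℕ, QVol Q a b ((k : ℝ) / N) (((k : ℝ) + 1) / N) = g (k + 1) - g k := by
    intro k
    simp only [hgdef, QVol]
    push_cast
    ring
  have hsum : (0 : ℝ) = g (n + 1) - g 0 := by
    calc (0 : ℝ) = ∑ k ∈ Finset.range (n + 1),
          QVol Q a b ((k : ℝ) / N) (((k : ℝ) + 1) / N) := (Finset.sum_eq_zero hzero).symm
      _ = ∑ k ∈ Finset.range (n + 1), (g (k + 1) - g k) :=
          Finset.sum_congr rfl (fun k _ => hterm k)
      _ = g (n + 1) - g 0 := Finset.sum_range_sub g (n + 1)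
  have hgN : g (n + 1) = b - a := by
    have h1 : ((n + 1 : ℕ) : ℝ) / N = 1 := by
      rw [hNdef]; push_cast; field_simp
    simp only [hgdef, h1]
    rw [(hQ.2.1 b hbI).2.2.1, (hQ.2.1 a haI).2.2.1]
  have hg0 : g 0 = 0 := by
    simp only [hgdef, Nat.cast_zero, zero_div]
    rw [(hQ.2.1 b hbI).1, (hQ.2.1 a haI).1]
    ring
  rw [hgN, hg0] at hsum
  linarith

/-- For every quasi-copula `Q`, the Hausdorff dimension of `supp(Q)`
is at least `1`. -/
theorem quasiCopula_support_dimH_ge_one (Q : ℝ → ℝ → ℝ) (hQ : IsQuasiCopula Q) :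
    1 ≤ dimH (suppQ Q) := by
  have him : Icc (0:ℝ) 1 ⊆ Prod.fst '' suppQ Q := by
    intro x hx
    obtain ⟨v, hv⟩ := fiber_meets_supp Q hQ x hx
    exact ⟨(x, v), hv, rfl⟩
  have h1 : dimH (Icc (0:ℝ) 1) = 1 := by
    rw [Real.dimH_of_mem_nhds (Icc_mem_nhds (show (0:ℝ) < 1/2 by norm_num)
      (show (1:ℝ)/2 < 1 by norm_num))]
    simp
  calc (1 : ENNReal) = dimH (Icc (0:ℝ) 1) := h1.symm
    _ ≤ dimH (Prod.fst '' suppQ Q) := dimH_mono him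
    _ ≤ dimH (suppQ Q) := LipschitzWith.prod_fst.dimH_image_le _
end

section
/- Every entry of a quasi-transformation matrix lies in the interval [−1/3, 1]; that is, conditions (a), (b), (c) of the definition imply −1/3 ≤ t_{ij} ≤ 1 for all i,j. -/
open Set MeasureTheory

/-- Block sum over columns `[s, t)` and rows `[u, v)`. -/
def Blk {m : ℕ} (T : Fin m → Fin m → ℝ) (s t u v : ℕ) : ℝ :=
  ∑ i ∈ Finset.univ.filter (fun i : Fin m => s ≤ (i : ℕ) ∧ (i : ℕ) < t),
    ∑ j ∈ Finset.univ.filter (fun j : Fin m => u ≤ (j : ℕ) ∧ (j : ℕ) < v), T i j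

lemma blk_split_col {m : ℕ} (T : Fin m → Fin m → ℝ) (s r t u v : ℕ)
    (h1 : s ≤ r) (h2 : r ≤ t) :
    Blk T s t u v = Blk T s r u v + Blk T r t u v := by
  unfold Blk
  rw [← Finset.sum_union]
  · apply Finset.sum_congr
    · ext i
      simp only [Finset.mem_union, Finset.mem_filter, Finset.mem_univ, true_and]
      omega
    · intro _ _; rfl
  · rw [Finset.disjoint_left]
    intro x hx hy
    simp only [Finset.mem_filter, Finset.mem_univ, true_and] at hx hy
    omega

lemma blk_split_row {m : ℕ} (T : Fin m → Fin m → ℝ) (s t u r v : ℕ)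
    (h1 : u ≤ r) (h2 : r ≤ v) :
    Blk T s t u v = Blk T s t u r + Blk T s t r v := by
  unfold Blk
  rw [← Finset.sum_add_distrib]
  apply Finset.sum_congr rfl
  intro i _
  rw [← Finset.sum_union]
  · apply Finset.sum_congr
    · ext j
      simp only [Finset.mem_union, Finset.mem_filter, Finset.mem_univ, true_and]
      omega
    · intro _ _; rfl
  · rw [Finset.disjoint_left]
    intro x hx hy
    simp only [Finset.mem_filter, Finset.mem_univ, true_and] at hx hy
    omega

lemma blk_nonneg {m : ℕ} (T : Fin m → Fin m → ℝ) (hT : IsQTMatrix T) (s t u v : ℕ)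
    (ht : t ≤ m) (hv : v ≤ m) (hb : s = 0 ∨ t = m ∨ u = 0 ∨ v = m) :
    0 ≤ Blk T s t u v := by
  by_cases h1 : t ≤ s
  · have he : Finset.univ.filter (fun i : Fin m => s ≤ (i : ℕ) ∧ (i : ℕ) < t) = ∅ := by
      ext i
      simp only [Finset.mem_filter, Finset.mem_univ, true_and, Finset.notMem_empty, iff_false]
      omega
    unfold Blk
    rw [he, Finset.sum_empty]
  by_cases h2 : v ≤ u
  · have he : Finset.univ.filter (fun j : Fin m => u ≤ (j : ℕ) ∧ (j : ℕ) < v) = ∅ := by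
      ext j
      simp only [Finset.mem_filter, Finset.mem_univ, true_and, Finset.notMem_empty, iff_false]
      omega
    unfold Blk
    rw [he]
    simp
  push_neg at h1 h2
  have e1 : Finset.univ.filter (fun i : Fin m => s ≤ (i : ℕ) ∧ (i : ℕ) < t) =
      Finset.univ.filter (fun i : Fin m => s ≤ (i : ℕ) ∧ (i : ℕ) ≤ t - 1) := by
    ext i
    simp only [Finset.mem_filter, Finset.mem_univ, true_and]
    omega
  have e2 : Finset.univ.filter (fun j : Fin m => u ≤ (j : ℕ) ∧ (j : ℕ) < v) =
      Finset.univ.filter (fun j : Fin m => u ≤ (j : ℕ) ∧ (j : ℕ) ≤ v - 1) := by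
    ext j
    simp only [Finset.mem_filter, Finset.mem_univ, true_and]
    omega
  unfold Blk
  simp only [e1, e2]
  exact hT.2.2.2 s (t - 1) u (v - 1) (by omega) (by omega) (by omega) (by omega) (by omega)

/-- Every entry of a quasi-transformation matrix lies in `[-1/3, 1]`. -/
theorem qtMatrix_entries_mem_Icc (m : ℕ) (T : Fin m → Fin m → ℝ) (hT : IsQTMatrix T) :
    ∀ i j, -(1/3 : ℝ) ≤ T i j ∧ T i j ≤ 1 := by
  intro i j
  have hm : 0 < m := i.pos
  set a := (i : ℕ) with ha'
  set b := (j : ℕ) with hb'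
  have ha : a < m := i.isLt
  have hb : b < m := j.isLt
  -- total sum is 1
  have htot : Blk T 0 m 0 m = 1 := by
    have e1 : Finset.univ.filter (fun i : Fin m => 0 ≤ (i : ℕ) ∧ (i : ℕ) < m) =
        (Finset.univ : Finset (Fin m)) := by
      ext x; simp [x.isLt]
    unfold Blk
    rw [e1]
    exact hT.1
  -- center block is the single entry
  have hcen : Blk T a (a + 1) b (b + 1) = T i j := by
    have e1 : Finset.univ.filter (fun x : Fin m => a ≤ (x : ℕ) ∧ (x : ℕ) < a + 1) = {i} := by
      ext x
      simp only [Finset.mem_filter, Finset.mem_univ, true_and, Finset.mem_singleton,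
        Fin.ext_iff]
      omega
    have e2 : Finset.univ.filter (fun x : Fin m => b ≤ (x : ℕ) ∧ (x : ℕ) < b + 1) = {j} := by
      ext x
      simp only [Finset.mem_filter, Finset.mem_univ, true_and, Finset.mem_singleton,
        Fin.ext_iff]
      omega
    unfold Blk
    rw [e1, e2, Finset.sum_singleton, Finset.sum_singleton]
  -- decompose the total into nine blocks
  have hdec : Blk T 0 m 0 m =
      (Blk T 0 a 0 b + Blk T 0 a b (b + 1) + Blk T 0 a (b + 1) m) +
      (Blk T a (a + 1) 0 b + Blk T a (a + 1) b (b + 1) + Blk T a (a + 1) (b + 1) m) +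
      (Blk T (a + 1) m 0 b + Blk T (a + 1) m b (b + 1) + Blk T (a + 1) m (b + 1) m) := by
    rw [blk_split_col T 0 a m 0 m (by omega) (by omega),
        blk_split_col T a (a + 1) m 0 m (by omega) (by omega),
        blk_split_row T 0 a 0 b m (by omega) (by omega),
        blk_split_row T 0 a b (b + 1) m (by omega) (by omega),
        blk_split_row T a (a + 1) 0 b m (by omega) (by omega),
        blk_split_row T a (a + 1) b (b + 1) m (by omega) (by omega),
        blk_split_row T (a + 1) m 0 b m (by omega) (by omega),
        blk_split_row T (a + 1) m b (b + 1) m (by omega) (by omega)]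
    ring
  -- nonnegativity of the eight outer blocks
  have h11 : 0 ≤ Blk T 0 a 0 b := blk_nonneg T hT _ _ _ _ (by omega) (by omega) (by omega)
  have h12 : 0 ≤ Blk T 0 a b (b + 1) := blk_nonneg T hT _ _ _ _ (by omega) (by omega) (by omega)
  have h13 : 0 ≤ Blk T 0 a (b + 1) m := blk_nonneg T hT _ _ _ _ (by omega) (by omega) (by omega)
  have h21 : 0 ≤ Blk T a (a + 1) 0 b := blk_nonneg T hT _ _ _ _ (by omega) (by omega) (by omega)
  have h23 : 0 ≤ Blk T a (a + 1) (b + 1) m :=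
    blk_nonneg T hT _ _ _ _ (by omega) (by omega) (by omega)
  have h31 : 0 ≤ Blk T (a + 1) m 0 b := blk_nonneg T hT _ _ _ _ (by omega) (by omega) (by omega)
  have h32 : 0 ≤ Blk T (a + 1) m b (b + 1) :=
    blk_nonneg T hT _ _ _ _ (by omega) (by omega) (by omega)
  have h33 : 0 ≤ Blk T (a + 1) m (b + 1) m :=
    blk_nonneg T hT _ _ _ _ (by omega) (by omega) (by omega)
  -- combinations of the center with each adjacent edge block
  have hx1 : 0 ≤ Blk T a (a + 1) 0 b + Blk T a (a + 1) b (b + 1) := by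
    rw [← blk_split_row T a (a + 1) 0 b (b + 1) (by omega) (by omega)]
    exact blk_nonneg T hT _ _ _ _ (by omega) (by omega) (by omega)
  have hx2 : 0 ≤ Blk T a (a + 1) b (b + 1) + Blk T a (a + 1) (b + 1) m := by
    rw [← blk_split_row T a (a + 1) b (b + 1) m (by omega) (by omega)]
    exact blk_nonneg T hT _ _ _ _ (by omega) (by omega) (by omega)
  have hx3 : 0 ≤ Blk T 0 a b (b + 1) + Blk T a (a + 1) b (b + 1) := by
    rw [← blk_split_col T 0 a (a + 1) b (b + 1) (by omega) (by omega)]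
    exact blk_nonneg T hT _ _ _ _ (by omega) (by omega) (by omega)
  have hx4 : 0 ≤ Blk T a (a + 1) b (b + 1) + Blk T (a + 1) m b (b + 1) := by
    rw [← blk_split_col T a (a + 1) m b (b + 1) (by omega) (by omega)]
    exact blk_nonneg T hT _ _ _ _ (by omega) (by omega) (by omega)
  rw [htot] at hdec
  rw [← hcen]
  constructor
  · linarith
  · linarith
end

section
/- Let T=(t_{ij}) be a quasi-transformation matrix of order m ≥ 2 and let Q_T be a quasi-copula satisfying T(Q_T)=Q_T. Let l ∈ ℕ and let R_{i₁,…,i_l;j₁,…,j_l} = ω_{i₁j₁}∘ω_{i₂j₂}∘⋯∘ω_{i_lj_l}([0,1]²). If t_{i_l j_l} = 0, then the restriction of Q_T to R_{i₁,…,i_l;j₁,…,j_l} is affine: there exist real numbers γ₁, γ₂, γ₃ (depending on (i₁,…,i_l), (j₁,…,j_l) and T) such that Q_T(u,v) = γ₁ + γ₂u + γ₃v for all (u,v) in this rectangle. -/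
open Set MeasureTheory

/-! The fixed-point equation `Q = T(Q)` says that on `ω_{ij}(E)` the function `Q` is an affine
function of `ω_{ij}⁻¹` plus `t_{ij} · Q ∘ ω_{ij}⁻¹`; since `ω_{ij}⁻¹` is itself affine, `Q` is
affine on `ω_{ij}(E)` as soon as `t_{ij} · Q` is affine on `E`. When `t_{i_l j_l} = 0` this holds
on `E = [0,1]²`, and applying the observation to `ω_{i_{l-1} j_{l-1}}`, …, `ω_{i_1 j_1}` in turn
gives affinity on `ω_{i₁j₁} ∘ ⋯ ∘ ω_{i_l j_l}([0,1]²)`. -/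

open Function

def IsAffineOn (Q : ℝ → ℝ → ℝ) (S : Set (ℝ × ℝ)) : Prop :=
  ∃ γ₁ γ₂ γ₃ : ℝ, ∀ p ∈ S, Q p.1 p.2 = γ₁ + γ₂ * p.1 + γ₃ * p.2

theorem IsAffineOn.const_mul {Q : ℝ → ℝ → ℝ} {S : Set (ℝ × ℝ)} (h : IsAffineOn Q S) (c : ℝ) :
    IsAffineOn (fun u v => c * Q u v) S := by
  obtain ⟨γ₁, γ₂, γ₃, hγ⟩ := h
  exact ⟨c * γ₁, c * γ₂, c * γ₃, fun p hp => by beta_reduce; rw [hγ p hp]; ring⟩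

theorem isAffineOn_zero_mul (Q : ℝ → ℝ → ℝ) (S : Set (ℝ × ℝ)) :
    IsAffineOn (fun u v => 0 * Q u v) S :=
  ⟨0, 0, 0, fun _ _ => by ring⟩

theorem add_sub_mul_mem_Icc {a b x : ℝ} (hab : a ≤ b) (hx : x ∈ Icc (0 : ℝ) 1) :
    a + (b - a) * x ∈ Icc a b := by
  have hba : 0 ≤ b - a := sub_nonneg.2 hab
  constructor
  · nlinarith [hx.1]
  · nlinarith [hx.2]

theorem add_sub_mul_sub_div {a b x : ℝ} (hab : a < b) : (a + (b - a) * x - a) / (b - a) = x := by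
  rw [add_sub_cancel_left, mul_div_cancel_left₀ _ (sub_pos.2 hab).ne']

theorem List.foldr_comp_mapsTo {α : Type*} {s : Set α} (L : List (α → α))
    (h : ∀ f ∈ L, MapsTo f s s) : MapsTo (L.foldr (· ∘ ·) id) s s := by
  induction L with
  | nil => exact mapsTo_id s
  | cons f L ih =>
    exact (h f List.mem_cons_self).comp (ih fun g hg => h g (List.mem_cons_of_mem f hg))

section Partitions

variable {m : ℕ} (T : Fin m → Fin m → ℝ)

theorem colPart_succ_sub (i : Fin m) :
    colPart T ((i : ℕ) + 1) - colPart T i = ∑ j, T i j := by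
  have hfilter : (Finset.univ.filter fun i' : Fin m => (i' : ℕ) < i + 1) =
      insert i (Finset.univ.filter fun i' : Fin m => (i' : ℕ) < i) := by
    ext i'
    simp only [Finset.mem_filter, Finset.mem_insert, Finset.mem_univ, true_and, Fin.ext_iff]
    omega
  rw [colPart, colPart, hfilter, Finset.sum_insert (by simp), add_sub_cancel_right]

variable {T}

theorem colPart_nonneg (h : ∀ i, 0 ≤ ∑ j, T i j) (k : ℕ) : 0 ≤ colPart T k :=
  Finset.sum_nonneg fun i _ => h i

theorem colPart_le_sum (h : ∀ i, 0 ≤ ∑ j, T i j) (k : ℕ) :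
    colPart T k ≤ ∑ i, ∑ j, T i j :=
  Finset.sum_le_sum_of_subset_of_nonneg (Finset.filter_subset _ _) fun i _ _ => h i

namespace IsQTMatrix

theorem colPart_lt_succ (hT : IsQTMatrix T) (i : Fin m) :
    colPart T i < colPart T ((i : ℕ) + 1) :=
  sub_pos.1 <| (colPart_succ_sub T i).symm ▸ hT.2.1 i

-- The row lemmas reuse the column ones: `rowPart T` is definitionally `colPart (swap T)`.
theorem rowPart_lt_succ (hT : IsQTMatrix T) (j : Fin m) :
    rowPart T j < rowPart T ((j : ℕ) + 1) :=
  sub_pos.1 <| (colPart_succ_sub (swap T) j).symm ▸ hT.2.2.1 j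

theorem colPart_mem_Icc (hT : IsQTMatrix T) (k : ℕ) : colPart T k ∈ Icc (0 : ℝ) 1 :=
  ⟨colPart_nonneg (fun i => (hT.2.1 i).le) k,
    hT.1 ▸ colPart_le_sum (fun i => (hT.2.1 i).le) k⟩

theorem rowPart_mem_Icc (hT : IsQTMatrix T) (k : ℕ) : rowPart T k ∈ Icc (0 : ℝ) 1 :=
  ⟨colPart_nonneg (fun j => (hT.2.2.1 j).le) k,
    (Finset.sum_comm.trans hT.1) ▸ colPart_le_sum (T := swap T) (fun j => (hT.2.2.1 j).le) k⟩

theorem omegaMap_mem_cell (hT : IsQTMatrix T) (i j : Fin m) {x : ℝ × ℝ}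
    (hx : x ∈ Icc (0 : ℝ) 1 ×ˢ Icc (0 : ℝ) 1) :
    omegaMap T i j x ∈ Icc (colPart T i) (colPart T ((i : ℕ) + 1)) ×ˢ
      Icc (rowPart T j) (rowPart T ((j : ℕ) + 1)) :=
  ⟨add_sub_mul_mem_Icc (hT.colPart_lt_succ i).le hx.1,
    add_sub_mul_mem_Icc (hT.rowPart_lt_succ j).le hx.2⟩

theorem mapsTo_omegaMap (hT : IsQTMatrix T) (i j : Fin m) :
    MapsTo (omegaMap T i j) (Icc (0 : ℝ) 1 ×ˢ Icc (0 : ℝ) 1) (Icc (0 : ℝ) 1 ×ˢ Icc (0 : ℝ) 1) :=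
  fun _ hx =>
    have hcell := hT.omegaMap_mem_cell i j hx
    ⟨Icc_subset_Icc (hT.colPart_mem_Icc _).1 (hT.colPart_mem_Icc _).2 hcell.1,
      Icc_subset_Icc (hT.rowPart_mem_Icc _).1 (hT.rowPart_mem_Icc _).2 hcell.2⟩

theorem mapsTo_foldr_omegaMap (hT : IsQTMatrix T) {n : ℕ} (I J : Fin n → Fin m) :
    MapsTo ((List.ofFn fun k => omegaMap T (I k) (J k)).foldr (· ∘ ·) id)
      (Icc (0 : ℝ) 1 ×ˢ Icc (0 : ℝ) 1) (Icc (0 : ℝ) 1 ×ˢ Icc (0 : ℝ) 1) :=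
  List.foldr_comp_mapsTo _ fun _ hf => by
    obtain ⟨k, rfl⟩ := List.mem_ofFn.1 hf
    exact hT.mapsTo_omegaMap (I k) (J k)

end IsQTMatrix

theorem IsTTrans.isAffineOn_omegaMap_image {Q : ℝ → ℝ → ℝ} (hfix : IsTTrans T Q Q)
    (hT : IsQTMatrix T) (i j : Fin m) {E : Set (ℝ × ℝ)}
    (hE : E ⊆ Icc (0 : ℝ) 1 ×ˢ Icc (0 : ℝ) 1) (h : IsAffineOn (fun u v => T i j * Q u v) E) :
    IsAffineOn Q (omegaMap T i j '' E) := by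
  obtain ⟨γ₁, γ₂, γ₃, hγ⟩ := h
  set p := colPart T i
  set q := rowPart T j
  set dp := colPart T ((i : ℕ) + 1) - p
  set dq := rowPart T ((j : ℕ) + 1) - q
  set S := ∑ i' ∈ Finset.univ.filter (· < i), ∑ j' ∈ Finset.univ.filter (· < j), T i' j'
  set A := ∑ j' ∈ Finset.univ.filter (· < j), T i j'
  set B := ∑ i' ∈ Finset.univ.filter (· < i), T i' j
  have hdp : dp ≠ 0 := (sub_pos.2 (hT.colPart_lt_succ i)).ne'
  have hdq : dq ≠ 0 := (sub_pos.2 (hT.rowPart_lt_succ j)).ne'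
  -- With `x = (u - p) / dp` and `y = (v - q) / dq`, the fixed-point equation reads
  -- `Q u v = S + A x + B y + (γ₁ + γ₂ x + γ₃ y)` on the image.
  refine ⟨S + γ₁ - (A + γ₂) / dp * p - (B + γ₃) / dq * q, (A + γ₂) / dp, (B + γ₃) / dq, ?_⟩
  rintro _ ⟨x, hx, rfl⟩
  have hcell := hT.omegaMap_mem_cell i j (hE hx)
  rw [hfix i j _ _ hcell.1 hcell.2, omegaMap, add_sub_mul_sub_div (hT.colPart_lt_succ i),
    add_sub_mul_sub_div (hT.rowPart_lt_succ j), show T i j * Q x.1 x.2 = _ from hγ x hx]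
  field_simp
  ring

theorem IsTTrans.isAffineOn_image_foldr_omegaMap {Q : ℝ → ℝ → ℝ} (hfix : IsTTrans T Q Q) (hT : IsQTMatrix T) (l : ℕ)
    (I J : Fin (l + 1) → Fin m) (hzero : T (I (Fin.last l)) (J (Fin.last l)) = 0) :
    IsAffineOn Q (((List.ofFn fun k => omegaMap T (I k) (J k)).foldr (· ∘ ·) id) ''
      (Icc (0 : ℝ) 1 ×ˢ Icc (0 : ℝ) 1)) := by
  induction l with
  | zero =>
    rw [List.ofFn_succ, List.ofFn_zero, List.foldr_cons, List.foldr_nil, comp_id]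
    exact hfix.isAffineOn_omegaMap_image hT (I 0) (J 0) subset_rfl
      (hzero ▸ isAffineOn_zero_mul Q _)
  | succ l ih =>
    have hinner := ih (I ∘ Fin.succ) (J ∘ Fin.succ) (by simpa [Fin.succ_last] using hzero)
    have hinner_sub := (hT.mapsTo_foldr_omegaMap (I ∘ Fin.succ) (J ∘ Fin.succ)).image_subset
    rw [List.ofFn_succ, List.foldr_cons, image_comp]
    exact hfix.isAffineOn_omegaMap_image hT (I 0) (J 0) hinner_sub (hinner.const_mul _)

end Partitions

theorem qtFixedPoint_affine_on_null_rectangle_general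
    {m : ℕ} (T : Fin m → Fin m → ℝ) (hT : IsQTMatrix T)
    (Q : ℝ → ℝ → ℝ) (hfix : IsTTrans T Q Q)
    (l : ℕ) (I J : Fin (l + 1) → Fin m)
    (hzero : T (I (Fin.last l)) (J (Fin.last l)) = 0) :
    ∃ γ₁ γ₂ γ₃ : ℝ,
      ∀ p ∈ ((List.ofFn fun k => omegaMap T (I k) (J k)).foldr (· ∘ ·) id) ''
          (Icc (0:ℝ) 1 ×ˢ Icc (0:ℝ) 1),
        Q p.1 p.2 = γ₁ + γ₂ * p.1 + γ₃ * p.2 :=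
  hfix.isAffineOn_image_foldr_omegaMap hT l I J hzero

/-- If `T` is a quasi-transformation matrix of order `m ≥ 2`, `Q_T` is a
quasi-copula with `T(Q_T) = Q_T`, and the last index pair of the rectangle
`R_{i₁,…,i_l;j₁,…,j_l} = ω_{i₁j₁} ∘ ⋯ ∘ ω_{i_lj_l}([0,1]²)` satisfies `t_{i_l j_l} = 0`,
then `Q_T` is affine on that rectangle. -/
theorem qtFixedPoint_affine_on_null_rectangle
    {m : ℕ} (hm : 2 ≤ m) (T : Fin m → Fin m → ℝ) (hT : IsQTMatrix T)
    (Q : ℝ → ℝ → ℝ) (hQ : IsQuasiCopula Q) (hfix : IsTTrans T Q Q)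
    (l : ℕ) (I J : Fin (l + 1) → Fin m)
    (hzero : T (I (Fin.last l)) (J (Fin.last l)) = 0) :
    ∃ γ₁ γ₂ γ₃ : ℝ,
      ∀ p ∈ ((List.ofFn fun k => omegaMap T (I k) (J k)).foldr (· ∘ ·) id) ''
          (Icc (0:ℝ) 1 ×ˢ Icc (0:ℝ) 1),
        Q p.1 p.2 = γ₁ + γ₂ * p.1 + γ₃ * p.2 :=
  qtFixedPoint_affine_on_null_rectangle_general T hT Q hfix l I J hzero
end

section
/- Let T=(t_{ij}) be a proper quasi-transformation matrix of order m ≥ 2 and let Q_T be the quasi-copula satisfying T(Q_T)=Q_T. Then supp(Q_T) is a nonempty compact subset of [0,1]² satisfying supp(Q_T) = ⋃_{(i,j): t_{ij}≠0} ω_{ij}(supp(Q_T)), and supp(Q_T) = ⋂_{k≥0} W^k([0,1]²), where W(A) = ⋃_{(i,j): t_{ij}≠0} ω_{ij}(A); i.e., supp(Q_T) is the invariant set of the iterated function system {[0,1]²; (ω_{ij})_{t_{ij}≠0}}. -/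
open Set MeasureTheory

/-!
On each cell `R_{ij}` the fixed-point equation `T(Q) = Q` makes the `Q`-volume of a rectangle
equal to `t_{ij}` times the `Q`-volume of its preimage under `ω_{ij}`. Hence `ω_{ij}` maps `supp Q`
into itself when `t_{ij} ≠ 0`; and every point of `supp Q` has a preimage in `supp Q` under some
`ω_{ij}` with `t_{ij} ≠ 0`, since a small rectangle around it splits into four quadrants, each
inside a single cell. So `supp Q = W(supp Q)` for the Hutchinson operator `W`, whence
`supp Q ⊆ W^k([0,1]²)` for every `k`. Conversely, a point of `W^k([0,1]²)` lies in a rectangle with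
sides at most `θ^k`, `θ < 1` the largest cell side, whose `Q`-volume is a product of nonzero
entries of `T`; so the point has no `Q`-null neighbourhood. Nonemptiness and compactness then come
from Cantor's intersection theorem.
-/
open Filter Topology Metric

section QVolume

variable {Q : ℝ → ℝ → ℝ}

theorem QVol_add_fst (Q : ℝ → ℝ → ℝ) (a s b c d : ℝ) :
    QVol Q a s c d + QVol Q s b c d = QVol Q a b c d := by
  unfold QVol; ring

theorem QVol_add_snd (Q : ℝ → ℝ → ℝ) (a b c s d : ℝ) :
    QVol Q a b c s + QVol Q a b s d = QVol Q a b c d := by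
  unfold QVol; ring

theorem QVol_swap_fst (Q : ℝ → ℝ → ℝ) (a b c d : ℝ) : QVol Q a b c d = -QVol Q b a c d := by
  unfold QVol; ring

theorem QVol_swap_snd (Q : ℝ → ℝ → ℝ) (a b c d : ℝ) : QVol Q a b c d = -QVol Q a b d c := by
  unfold QVol; ring

theorem IsQuasiCopula.QVol_unitSquare (hQ : IsQuasiCopula Q) : QVol Q 0 1 0 1 = 1 := by
  obtain ⟨h10, h01, h11, -⟩ := hQ.2.1 1 ⟨zero_le_one, le_rfl⟩
  obtain ⟨h00, -⟩ := hQ.2.1 0 ⟨le_rfl, zero_le_one⟩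
  simp only [QVol, h10, h01, h11, h00]
  norm_num

/-- The corners need not be ordered, as `QVol` is alternating in each pair of them. -/
def IsNullOn (Q : ℝ → ℝ → ℝ) (I J : Set ℝ) : Prop :=
  ∀ a ∈ I, ∀ b ∈ I, ∀ c ∈ J, ∀ d ∈ J, QVol Q a b c d = 0

namespace IsNullOn

variable {I J I' J' : Set ℝ}

theorem mono (h : IsNullOn Q I J) (hI : I' ⊆ I) (hJ : J' ⊆ J) : IsNullOn Q I' J' :=
  fun a ha b hb c hc d hd => h a (hI ha) b (hI hb) c (hJ hc) d (hJ hd)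

theorem of_le (h : ∀ a ∈ I, ∀ b ∈ I, ∀ c ∈ J, ∀ d ∈ J, a ≤ b → c ≤ d → QVol Q a b c d = 0) :
    IsNullOn Q I J := by
  intro a ha b hb c hc d hd
  rcases le_total a b with hab | hba <;> rcases le_total c d with hcd | hdc
  · exact h a ha b hb c hc d hd hab hcd
  · rw [QVol_swap_snd, h a ha b hb d hd c hc hab hdc, neg_zero]
  · rw [QVol_swap_fst, h b hb a ha c hc d hd hba hcd, neg_zero]
  · rw [QVol_swap_fst, QVol_swap_snd, h b hb a ha d hd c hc hba hdc, neg_zero, neg_zero]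

theorem of_split_fst {x : ℝ} (hx : x ∈ I) (hl : IsNullOn Q (I ∩ Iic x) J)
    (hr : IsNullOn Q (I ∩ Ici x) J) : IsNullOn Q I J := by
  have hto : ∀ a ∈ I, ∀ c ∈ J, ∀ d ∈ J, QVol Q a x c d = 0 := by
    intro a ha c hc d hd
    rcases le_total a x with hax | hxa
    · exact hl a ⟨ha, hax⟩ x ⟨hx, self_mem_Iic⟩ c hc d hd
    · exact hr a ⟨ha, hxa⟩ x ⟨hx, self_mem_Ici⟩ c hc d hd
  intro a ha b hb c hc d hd
  rw [← QVol_add_fst Q a x b, QVol_swap_fst Q x b, hto a ha c hc d hd, hto b hb c hc d hd]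
  simp

theorem of_split_snd {y : ℝ} (hy : y ∈ J) (hl : IsNullOn Q I (J ∩ Iic y))
    (hr : IsNullOn Q I (J ∩ Ici y)) : IsNullOn Q I J := by
  have hto : ∀ a ∈ I, ∀ b ∈ I, ∀ c ∈ J, QVol Q a b c y = 0 := by
    intro a ha b hb c hc
    rcases le_total c y with hcy | hyc
    · exact hl a ha b hb c ⟨hc, hcy⟩ y ⟨hy, self_mem_Iic⟩
    · exact hr a ha b hb c ⟨hc, hyc⟩ y ⟨hy, self_mem_Ici⟩
  intro a ha b hb c hc d hd
  rw [← QVol_add_snd Q a b c y d, QVol_swap_snd Q a b y d, hto a ha b hb c hc,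
    hto a ha b hb d hd]
  simp

end IsNullOn

theorem notMem_suppQ_iff {x : ℝ × ℝ} (hx : x ∈ Icc (0:ℝ) 1 ×ˢ Icc (0:ℝ) 1) :
    x ∉ suppQ Q ↔
      ∀ᶠ ε in 𝓝[>] 0, IsNullOn Q (ball x.1 ε ∩ Icc 0 1) (ball x.2 ε ∩ Icc 0 1) := by
  have hconn : ∀ (y ε : ℝ), (ball y ε ∩ Icc (0:ℝ) 1).OrdConnected := fun y ε => by
    rw [Real.ball_eq_Ioo]; exact ordConnected_Ioo.inter ordConnected_Icc
  constructor
  · intro hns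
    obtain ⟨R, ⟨⟨I₁, I₂, ⟨-, U₁, hU₁, rfl⟩, ⟨-, U₂, hU₂, rfl⟩, rfl⟩, hnull⟩, hxR⟩ :
        x ∈ ⋃₀ {R | OpenQNull Q R} := by
      by_contra h
      exact hns ⟨hx, h⟩
    obtain ⟨ε₁, hε₁, hball₁⟩ := Metric.isOpen_iff.1 hU₁ x.1 hxR.1.1
    obtain ⟨ε₂, hε₂, hball₂⟩ := Metric.isOpen_iff.1 hU₂ x.2 hxR.2.1
    filter_upwards [Ioo_mem_nhdsGT (lt_min hε₁ hε₂)] with ε hε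
    refine IsNullOn.of_le fun a ha b hb c hc d hd hab hcd => hnull a b c d hab hcd ?_
    refine prod_mono ?_ ?_
    · refine ((hconn _ _).out ha hb).trans (inter_subset_inter_left _ ?_)
      exact (ball_subset_ball (hε.2.le.trans (min_le_left _ _))).trans hball₁
    · refine ((hconn _ _).out hc hd).trans (inter_subset_inter_left _ ?_)
      exact (ball_subset_ball (hε.2.le.trans (min_le_right _ _))).trans hball₂
  · intro h hxS
    obtain ⟨ε, hnull, hε⟩ := (h.and self_mem_nhdsWithin).exists
    have hopen : ∀ y : ℝ, IsRelOpenInterval (ball y ε ∩ Icc 0 1) := fun y =>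
      ⟨hconn y ε, _, isOpen_ball, rfl⟩
    refine hxS.2 ⟨_, ⟨⟨_, _, hopen x.1, hopen x.2, rfl⟩, fun a b c d hab hcd hsub => ?_⟩,
      ⟨mem_ball_self hε, hx.1⟩, ⟨mem_ball_self hε, hx.2⟩⟩
    have hac := hsub (mk_mem_prod (left_mem_Icc.2 hab) (left_mem_Icc.2 hcd))
    have hbd := hsub (mk_mem_prod (right_mem_Icc.2 hab) (right_mem_Icc.2 hcd))
    exact hnull a hac.1 b hbd.1 c hac.2 d hbd.2

end QVolume

structure IsUnitPartition (p : ℕ → ℝ) (m : ℕ) : Prop where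
  zero : p 0 = 0
  last : p m = 1
  mono : Monotone p
  lt_succ : ∀ i < m, p i < p (i + 1)

namespace IsUnitPartition

variable {p : ℕ → ℝ} {m : ℕ}

theorem nonneg (hp : IsUnitPartition p m) (i : ℕ) : 0 ≤ p i :=
  hp.zero ▸ hp.mono (Nat.zero_le i)

theorem le_one (hp : IsUnitPartition p m) {i : ℕ} (hi : i ≤ m) : p i ≤ 1 :=
  hp.last ▸ hp.mono hi

theorem ne_zero (hp : IsUnitPartition p m) : m ≠ 0 := by
  rintro rfl
  simpa [hp.zero] using hp.last

theorem succ_sub_lt_one (hp : IsUnitPartition p m) (hm : 2 ≤ m) {i : ℕ} (hi : i < m) :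
    p (i + 1) - p i < 1 := by
  rcases i with _ | i
  · linarith [hp.zero, hp.lt_succ 1 (by omega), hp.le_one hm]
  · linarith [hp.zero, hp.lt_succ 0 (by omega), hp.mono (by omega : 1 ≤ i + 1), hp.le_one hi]

theorem exists_cell_left (hp : IsUnitPartition p m) {x : ℝ} (hx : x ∈ Icc (0:ℝ) 1) :
    ∃ i < m, x ∈ Icc (p i) (p (i + 1)) ∧
      ∀ᶠ δ in 𝓝[>] 0, ball x δ ∩ Icc 0 1 ∩ Iic x ⊆ Icc (p i) (p (i + 1)) := by
  classical
  have hm := hp.ne_zero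
  have hlast : x ≤ p (m - 1 + 1) := by rw [Nat.sub_add_cancel (by omega), hp.last]; exact hx.2
  have hex : ∃ k, x ≤ p (k + 1) := ⟨m - 1, hlast⟩
  set i := Nat.find hex
  have hxi : x ≤ p (i + 1) := Nat.find_spec hex
  have him : i < m := by
    have := Nat.find_min' hex hlast
    omega
  have hlow : p i < x ∨ p i = 0 := by
    rcases hi : i with _ | k
    · exact Or.inr hp.zero
    · exact Or.inl (not_le.1 (Nat.find_min hex (by omega : k < i)))
  refine ⟨i, him, ⟨?_, hxi⟩, ?_⟩
  · rcases hlow with h | h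
    · exact h.le
    · exact h ▸ hx.1
  · rcases hlow with h | h
    · filter_upwards [Ioo_mem_nhdsGT (sub_pos.2 h)] with δ hδ a ⟨⟨ha, _⟩, hax⟩
      rw [mem_ball, Real.dist_eq, abs_sub_lt_iff] at ha
      exact ⟨by linarith [hδ.2], hax.trans hxi⟩
    · exact Eventually.of_forall fun _ a ⟨⟨_, ha⟩, hax⟩ => ⟨h ▸ ha.1, le_trans hax hxi⟩

theorem exists_cell_right (hp : IsUnitPartition p m) {x : ℝ} (hx : x ∈ Icc (0:ℝ) 1) :
    ∃ i < m, x ∈ Icc (p i) (p (i + 1)) ∧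
      ∀ᶠ δ in 𝓝[>] 0, ball x δ ∩ Icc 0 1 ∩ Ici x ⊆ Icc (p i) (p (i + 1)) := by
  classical
  have hm := hp.ne_zero
  set i := Nat.findGreatest (fun k => p k ≤ x) (m - 1)
  have hxi : p i ≤ x :=
    Nat.findGreatest_spec (P := fun k => p k ≤ x) (Nat.zero_le _) (hp.zero ▸ hx.1)
  have him : i < m := by
    have := Nat.findGreatest_le (P := fun k => p k ≤ x) (m - 1)
    omega
  have hup : x < p (i + 1) ∨ p (i + 1) = 1 := by
    by_cases h : i + 1 ≤ m - 1
    · exact Or.inl (not_le.1 (Nat.findGreatest_is_greatest (Nat.lt_succ_self i) h))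
    · exact Or.inr (by rw [show i + 1 = m by omega, hp.last])
  refine ⟨i, him, ⟨hxi, ?_⟩, ?_⟩
  · rcases hup with h | h
    · exact h.le
    · exact h ▸ hx.2
  · rcases hup with h | h
    · filter_upwards [Ioo_mem_nhdsGT (sub_pos.2 h)] with δ hδ a ⟨⟨ha, _⟩, hxa⟩
      rw [mem_ball, Real.dist_eq, abs_sub_lt_iff] at ha
      exact ⟨hxi.trans hxa, by linarith [hδ.2]⟩
    · exact Eventually.of_forall fun _ a ⟨⟨_, ha⟩, hxa⟩ => ⟨hxi.trans hxa, h ▸ ha.2⟩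

end IsUnitPartition

section Partition

variable {m : ℕ} {T : Fin m → Fin m → ℝ}

theorem colPart_succ (T : Fin m → Fin m → ℝ) (k : Fin m) :
    colPart T (k + 1) = colPart T k + ∑ j, T k j := by
  unfold colPart
  rw [show Finset.univ.filter (fun i : Fin m => (i : ℕ) < k + 1)
      = insert k (Finset.univ.filter (fun i : Fin m => (i : ℕ) < k)) by
    ext i
    simp [le_iff_lt_or_eq, Fin.val_eq_val, or_comm]]
  rw [Finset.sum_insert (by simp)]
  ring

theorem isUnitPartition_colPart (h1 : ∑ i, ∑ j, T i j = 1) (h2 : ∀ i, 0 < ∑ j, T i j) :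
    IsUnitPartition (colPart T) m where
  zero := by simp [colPart]
  last := by simpa [colPart] using h1
  mono k l hkl := by
    refine Finset.sum_le_sum_of_subset_of_nonneg ?_ fun i _ _ => (h2 i).le
    intro i
    simp only [Finset.mem_filter, Finset.mem_univ, true_and]
    omega
  lt_succ k hk := by
    simpa using colPart_succ T ⟨k, hk⟩ ▸ lt_add_of_pos_right _ (h2 ⟨k, hk⟩)

theorem isUnitPartition_rowPart (h1 : ∑ i, ∑ j, T i j = 1) (h3 : ∀ j, 0 < ∑ i, T i j) :
    IsUnitPartition (rowPart T) m :=
  isUnitPartition_colPart (T := fun i j => T j i) (by rwa [Finset.sum_comm]) h3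

end Partition

section Affine

variable {p q : ℝ}

theorem affine_mem_Icc (hpq : p ≤ q) {t : ℝ} (ht : t ∈ Icc (0:ℝ) 1) :
    p + (q - p) * t ∈ Icc p q :=
  ⟨by nlinarith [ht.1], by nlinarith [ht.2]⟩

theorem div_mem_unitInterval (hpq : p < q) {x : ℝ} (hx : x ∈ Icc p q) :
    (x - p) / (q - p) ∈ Icc (0:ℝ) 1 := by
  have hd : 0 < q - p := sub_pos.2 hpq
  exact ⟨div_nonneg (by linarith [hx.1]) hd.le, (div_le_one hd).2 (by linarith [hx.2])⟩

theorem affine_div_cancel (hpq : p < q) (x : ℝ) : p + (q - p) * ((x - p) / (q - p)) = x := by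
  field_simp [(sub_pos.2 hpq).ne']
  ring

theorem div_affine_cancel (hpq : p < q) (t : ℝ) : (p + (q - p) * t - p) / (q - p) = t := by
  field_simp [(sub_pos.2 hpq).ne']
  ring

theorem affine_mem_ball_inter (hp : 0 ≤ p) (hpq : p < q) (hq : q ≤ 1) {s ε a : ℝ}
    (ha : a ∈ ball s ε ∩ Icc 0 1) : p + (q - p) * a ∈ ball (p + (q - p) * s) ε ∩ Icc 0 1 := by
  obtain ⟨ha, ha01⟩ := ha
  refine ⟨?_, Icc_subset_Icc hp hq (affine_mem_Icc hpq.le ha01)⟩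
  rw [mem_ball, Real.dist_eq] at ha ⊢
  calc |p + (q - p) * a - (p + (q - p) * s)| = (q - p) * |a - s| := by
        rw [add_sub_add_left_eq_sub, ← mul_sub, abs_mul, abs_of_pos (sub_pos.2 hpq)]
    _ ≤ 1 * |a - s| := by gcongr; linarith
    _ < ε := by linarith

theorem div_mem_ball_inter (hpq : p < q) {x ε δ a : ℝ} (hδ : δ ≤ ε * (q - p))
    (ha : a ∈ Icc p q ∩ ball x δ) : (a - p) / (q - p) ∈ ball ((x - p) / (q - p)) ε ∩ Icc 0 1 := by
  obtain ⟨hapq, ha⟩ := ha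
  have hd : 0 < q - p := sub_pos.2 hpq
  refine ⟨?_, div_mem_unitInterval hpq hapq⟩
  rw [mem_ball, Real.dist_eq] at ha ⊢
  rw [← sub_div, sub_sub_sub_cancel_right, abs_div, abs_of_pos hd, div_lt_iff₀ hd]
  linarith

end Affine

section Cell

variable {m : ℕ} {T : Fin m → Fin m → ℝ} {Q : ℝ → ℝ → ℝ}

theorem omegaMap_mem_unitSquare (hP : IsUnitPartition (colPart T) m)
    (hR : IsUnitPartition (rowPart T) m) (i j : Fin m) {u : ℝ × ℝ}
    (hu : u ∈ Icc (0:ℝ) 1 ×ˢ Icc (0:ℝ) 1) : omegaMap T i j u ∈ Icc (0:ℝ) 1 ×ˢ Icc (0:ℝ) 1 :=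
  ⟨Icc_subset_Icc (hP.nonneg i) (hP.le_one i.2) (affine_mem_Icc (hP.lt_succ i i.2).le hu.1),
    Icc_subset_Icc (hR.nonneg j) (hR.le_one j.2) (affine_mem_Icc (hR.lt_succ j j.2).le hu.2)⟩

theorem monotone_omegaMap (hP : IsUnitPartition (colPart T) m)
    (hR : IsUnitPartition (rowPart T) m) (i j : Fin m) : Monotone (omegaMap T i j) :=
  fun u v huv => by
    have hp := sub_pos.2 (hP.lt_succ i i.2)
    have hq := sub_pos.2 (hR.lt_succ j j.2)
    exact ⟨by dsimp only [omegaMap]; gcongr; exact huv.1,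
      by dsimp only [omegaMap]; gcongr; exact huv.2⟩

theorem exists_omegaMap_eq (hP : IsUnitPartition (colPart T) m)
    (hR : IsUnitPartition (rowPart T) m) {i j : Fin m} {x : ℝ × ℝ}
    (hx : x ∈ Icc (colPart T i) (colPart T (i + 1)) ×ˢ Icc (rowPart T j) (rowPart T (j + 1))) :
    ∃ y ∈ Icc (0:ℝ) 1 ×ˢ Icc (0:ℝ) 1, omegaMap T i j y = x := by
  have hp := hP.lt_succ i i.2
  have hq := hR.lt_succ j j.2
  exact ⟨(_, _), ⟨div_mem_unitInterval hp hx.1, div_mem_unitInterval hq hx.2⟩,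
    Prod.ext (affine_div_cancel hp x.1) (affine_div_cancel hq x.2)⟩

theorem QVol_eq_mul_of_mem_cell (hfix : IsTTrans T Q Q) {i j : Fin m} {a b c d : ℝ}
    (ha : a ∈ Icc (colPart T i) (colPart T (i + 1)))
    (hb : b ∈ Icc (colPart T i) (colPart T (i + 1)))
    (hc : c ∈ Icc (rowPart T j) (rowPart T (j + 1)))
    (hd : d ∈ Icc (rowPart T j) (rowPart T (j + 1))) :
    QVol Q a b c d = T i j *
      QVol Q ((a - colPart T i) / (colPart T (i + 1) - colPart T i))
        ((b - colPart T i) / (colPart T (i + 1) - colPart T i))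
        ((c - rowPart T j) / (rowPart T (j + 1) - rowPart T j))
        ((d - rowPart T j) / (rowPart T (j + 1) - rowPart T j)) := by
  unfold QVol
  rw [hfix i j b d hb hd, hfix i j b c hb hc, hfix i j a d ha hd, hfix i j a c ha hc]
  ring

theorem QVol_omegaMap (hP : IsUnitPartition (colPart T) m) (hR : IsUnitPartition (rowPart T) m)
    (hfix : IsTTrans T Q Q) (i j : Fin m) {u v : ℝ × ℝ}
    (hu : u ∈ Icc (0:ℝ) 1 ×ˢ Icc (0:ℝ) 1) (hv : v ∈ Icc (0:ℝ) 1 ×ˢ Icc (0:ℝ) 1) :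
    QVol Q (omegaMap T i j u).1 (omegaMap T i j v).1 (omegaMap T i j u).2 (omegaMap T i j v).2 =
      T i j * QVol Q u.1 v.1 u.2 v.2 := by
  have hp := hP.lt_succ i i.2
  have hq := hR.lt_succ j j.2
  dsimp only [omegaMap]
  rw [QVol_eq_mul_of_mem_cell hfix (affine_mem_Icc hp.le hu.1) (affine_mem_Icc hp.le hv.1)
    (affine_mem_Icc hq.le hu.2) (affine_mem_Icc hq.le hv.2)]
  simp only [div_affine_cancel hp, div_affine_cancel hq]

end Cell

section Hutchinson

variable {m : ℕ} {T : Fin m → Fin m → ℝ} {Q : ℝ → ℝ → ℝ}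

/-- The Hutchinson operator `W` of the iterated function system `(ω_{ij})_{t_{ij} ≠ 0}`. -/
def hutchinson (T : Fin m → Fin m → ℝ) (A : Set (ℝ × ℝ)) : Set (ℝ × ℝ) :=
  ⋃ i, ⋃ j, ⋃ (_ : T i j ≠ 0), omegaMap T i j '' A

theorem mem_hutchinson {A : Set (ℝ × ℝ)} {x : ℝ × ℝ} :
    x ∈ hutchinson T A ↔ ∃ i j, T i j ≠ 0 ∧ ∃ y ∈ A, omegaMap T i j y = x := by
  simp [hutchinson]

theorem hutchinson_mono : Monotone (hutchinson T) := fun _ _ h =>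
  iUnion_mono fun _ => iUnion_mono fun _ => iUnion_mono fun _ => image_mono h

theorem hutchinson_unitSquare_subset (hP : IsUnitPartition (colPart T) m)
    (hR : IsUnitPartition (rowPart T) m) :
    hutchinson T (Icc 0 1 ×ˢ Icc 0 1) ⊆ Icc 0 1 ×ˢ Icc 0 1 := by
  intro x hx
  obtain ⟨i, j, -, y, hy, rfl⟩ := mem_hutchinson.1 hx
  exact omegaMap_mem_unitSquare hP hR i j hy

theorem IsCompact.hutchinson {A : Set (ℝ × ℝ)} (hA : IsCompact A) :
    IsCompact (hutchinson T A) :=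
  isCompact_iUnion fun _ => isCompact_iUnion fun _ => isCompact_iUnion fun _ =>
    hA.image (by unfold omegaMap; fun_prop)

theorem Set.Nonempty.hutchinson (h1 : ∑ i, ∑ j, T i j = 1) {A : Set (ℝ × ℝ)}
    (hA : A.Nonempty) : (hutchinson T A).Nonempty := by
  obtain ⟨i, -, hi⟩ := Finset.exists_ne_zero_of_sum_ne_zero (h1.trans_ne one_ne_zero)
  obtain ⟨j, -, hij⟩ := Finset.exists_ne_zero_of_sum_ne_zero hi
  obtain ⟨y, hy⟩ := hA
  exact ⟨_, mem_hutchinson.2 ⟨i, j, hij, y, hy, rfl⟩⟩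

theorem hutchinson_suppQ_subset (hP : IsUnitPartition (colPart T) m)
    (hR : IsUnitPartition (rowPart T) m) (hfix : IsTTrans T Q Q) :
    hutchinson T (suppQ Q) ⊆ suppQ Q := by
  intro x hx
  obtain ⟨i, j, ht, y, hy, rfl⟩ := mem_hutchinson.1 hx
  have hp := hP.lt_succ i i.2
  have hq := hR.lt_succ j j.2
  by_contra hx'
  refine (notMem_suppQ_iff hy.1).2 ?_ hy
  filter_upwards [(notMem_suppQ_iff (omegaMap_mem_unitSquare hP hR i j hy.1)).1 hx'] with ε hε
  intro a ha b hb c hc d hd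
  have hab := hε _ (affine_mem_ball_inter (hP.nonneg i) hp (hP.le_one i.2) ha)
    _ (affine_mem_ball_inter (hP.nonneg i) hp (hP.le_one i.2) hb)
    _ (affine_mem_ball_inter (hR.nonneg j) hq (hR.le_one j.2) hc)
    _ (affine_mem_ball_inter (hR.nonneg j) hq (hR.le_one j.2) hd)
  have hscale := QVol_omegaMap hP hR hfix i j (u := (a, c)) (v := (b, d)) ⟨ha.2, hc.2⟩ ⟨hb.2, hd.2⟩
  exact (mul_eq_zero.1 (hscale.symm.trans hab)).resolve_left ht

theorem eventually_isNullOn_cell (hP : IsUnitPartition (colPart T) m)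
    (hR : IsUnitPartition (rowPart T) m) (hfix : IsTTrans T Q Q) {i j : Fin m} {y : ℝ × ℝ}
    (hy : y ∈ Icc (0:ℝ) 1 ×ˢ Icc (0:ℝ) 1) (h : T i j = 0 ∨ y ∉ suppQ Q) :
    ∀ᶠ δ in 𝓝[>] 0, IsNullOn Q
      (Icc (colPart T i) (colPart T (i + 1)) ∩ ball (omegaMap T i j y).1 δ)
      (Icc (rowPart T j) (rowPart T (j + 1)) ∩ ball (omegaMap T i j y).2 δ) := by
  rcases h with ht | hy'
  · refine Eventually.of_forall fun δ a ha b hb c hc d hd => ?_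
    rw [QVol_eq_mul_of_mem_cell hfix ha.1 hb.1 hc.1 hd.1, ht, zero_mul]
  have hp := hP.lt_succ i i.2
  have hq := hR.lt_succ j j.2
  obtain ⟨ε, hnull, hε⟩ := (((notMem_suppQ_iff hy).1 hy').and self_mem_nhdsWithin).exists
  have hsides : 0 < min (colPart T (i + 1) - colPart T i) (rowPart T (j + 1) - rowPart T j) :=
    lt_min (sub_pos.2 hp) (sub_pos.2 hq)
  filter_upwards [Ioo_mem_nhdsGT (mul_pos hε hsides)] with δ hδ
  have hδp : δ ≤ ε * (colPart T (i + 1) - colPart T i) :=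
    hδ.2.le.trans (mul_le_mul_of_nonneg_left (min_le_left _ _) hε.le)
  have hδq : δ ≤ ε * (rowPart T (j + 1) - rowPart T j) :=
    hδ.2.le.trans (mul_le_mul_of_nonneg_left (min_le_right _ _) hε.le)
  have hy₁ := div_affine_cancel hp y.1
  have hy₂ := div_affine_cancel hq y.2
  intro a ha b hb c hc d hd
  rw [QVol_eq_mul_of_mem_cell hfix ha.1 hb.1 hc.1 hd.1]
  refine mul_eq_zero_of_right _ (hnull _ ?_ _ ?_ _ ?_ _ ?_)
  · simpa only [omegaMap, hy₁] using div_mem_ball_inter hp hδp ha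
  · simpa only [omegaMap, hy₁] using div_mem_ball_inter hp hδp hb
  · simpa only [omegaMap, hy₂] using div_mem_ball_inter hq hδq hc
  · simpa only [omegaMap, hy₂] using div_mem_ball_inter hq hδq hd

theorem suppQ_subset_hutchinson (hP : IsUnitPartition (colPart T) m)
    (hR : IsUnitPartition (rowPart T) m) (hfix : IsTTrans T Q Q) :
    suppQ Q ⊆ hutchinson T (suppQ Q) := by
  intro x hx
  by_contra hx'
  have hcell : ∀ i j : Fin m,
      x ∈ Icc (colPart T i) (colPart T (i + 1)) ×ˢ Icc (rowPart T j) (rowPart T (j + 1)) →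
      ∀ᶠ δ in 𝓝[>] 0, IsNullOn Q (Icc (colPart T i) (colPart T (i + 1)) ∩ ball x.1 δ)
        (Icc (rowPart T j) (rowPart T (j + 1)) ∩ ball x.2 δ) := by
    intro i j hxij
    obtain ⟨y, hy, rfl⟩ := exists_omegaMap_eq hP hR hxij
    refine eventually_isNullOn_cell hP hR hfix hy ?_
    by_contra! h
    exact hx' (mem_hutchinson.2 ⟨i, j, h.1, y, h.2, rfl⟩)
  obtain ⟨i₁, hi₁, hxi₁, hleft₁⟩ := hP.exists_cell_left hx.1.1
  obtain ⟨i₂, hi₂, hxi₂, hright₁⟩ := hP.exists_cell_right hx.1.1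
  obtain ⟨j₁, hj₁, hxj₁, hleft₂⟩ := hR.exists_cell_left hx.1.2
  obtain ⟨j₂, hj₂, hxj₂, hright₂⟩ := hR.exists_cell_right hx.1.2
  refine (notMem_suppQ_iff hx.1).2 ?_ hx
  filter_upwards [hcell ⟨i₁, hi₁⟩ ⟨j₁, hj₁⟩ ⟨hxi₁, hxj₁⟩, hcell ⟨i₁, hi₁⟩ ⟨j₂, hj₂⟩ ⟨hxi₁, hxj₂⟩,
    hcell ⟨i₂, hi₂⟩ ⟨j₁, hj₁⟩ ⟨hxi₂, hxj₁⟩, hcell ⟨i₂, hi₂⟩ ⟨j₂, hj₂⟩ ⟨hxi₂, hxj₂⟩,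
    hleft₁, hright₁, hleft₂, hright₂, self_mem_nhdsWithin] with δ h₁₁ h₁₂ h₂₁ h₂₂ hl₁ hr₁ hl₂ hr₂ hδ
  have hx₁ : x.1 ∈ ball x.1 δ ∩ Icc 0 1 := ⟨mem_ball_self hδ, hx.1.1⟩
  have hx₂ : x.2 ∈ ball x.2 δ ∩ Icc 0 1 := ⟨mem_ball_self hδ, hx.1.2⟩
  refine .of_split_fst hx₁ (.of_split_snd hx₂ ?_ ?_) (.of_split_snd hx₂ ?_ ?_)
  · exact h₁₁.mono (fun a ha => ⟨hl₁ ha, ha.1.1⟩) (fun c hc => ⟨hl₂ hc, hc.1.1⟩)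
  · exact h₁₂.mono (fun a ha => ⟨hl₁ ha, ha.1.1⟩) (fun c hc => ⟨hr₂ hc, hc.1.1⟩)
  · exact h₂₁.mono (fun a ha => ⟨hr₁ ha, ha.1.1⟩) (fun c hc => ⟨hl₂ hc, hc.1.1⟩)
  · exact h₂₂.mono (fun a ha => ⟨hr₁ ha, ha.1.1⟩) (fun c hc => ⟨hr₂ hc, hc.1.1⟩)

theorem exists_QVol_ne_zero_of_mem_iterate_hutchinson (hQ : IsQuasiCopula Q)
    (hP : IsUnitPartition (colPart T) m) (hR : IsUnitPartition (rowPart T) m)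
    (hfix : IsTTrans T Q Q) {θ : ℝ} (hθP : ∀ i : Fin m, colPart T (i + 1) - colPart T i ≤ θ)
    (hθR : ∀ j : Fin m, rowPart T (j + 1) - rowPart T j ≤ θ) (k : ℕ) {x : ℝ × ℝ}
    (hx : x ∈ (hutchinson T)^[k] (Icc 0 1 ×ˢ Icc 0 1)) :
    ∃ u ∈ Icc (0:ℝ) 1 ×ˢ Icc (0:ℝ) 1, ∃ v ∈ Icc (0:ℝ) 1 ×ˢ Icc (0:ℝ) 1, u ≤ x ∧ x ≤ v ∧
      v.1 - u.1 ≤ θ ^ k ∧ v.2 - u.2 ≤ θ ^ k ∧ QVol Q u.1 v.1 u.2 v.2 ≠ 0 := by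
  induction k generalizing x with
  | zero =>
    refine ⟨(0, 0), ⟨left_mem_Icc.2 zero_le_one, left_mem_Icc.2 zero_le_one⟩, (1, 1),
      ⟨right_mem_Icc.2 zero_le_one, right_mem_Icc.2 zero_le_one⟩, ⟨hx.1.1, hx.2.1⟩,
      ⟨hx.1.2, hx.2.2⟩, by norm_num, by norm_num, ?_⟩
    simp [hQ.QVol_unitSquare]
  | succ k ih =>
    rw [Function.iterate_succ_apply'] at hx
    obtain ⟨i, j, ht, w, hw, rfl⟩ := mem_hutchinson.1 hx
    obtain ⟨u, hu, v, hv, huw, hwv, hvu₁, hvu₂, hvol⟩ := ih hw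
    have hp := sub_pos.2 (hP.lt_succ i i.2)
    have hq := sub_pos.2 (hR.lt_succ j j.2)
    refine ⟨_, omegaMap_mem_unitSquare hP hR i j hu, _, omegaMap_mem_unitSquare hP hR i j hv,
      ?_, ?_, ?_, ?_, ?_⟩
    · exact monotone_omegaMap hP hR i j huw
    · exact monotone_omegaMap hP hR i j hwv
    · calc _ = (colPart T (i + 1) - colPart T i) * (v.1 - u.1) := by simp only [omegaMap]; ring
        _ ≤ θ * θ ^ k := mul_le_mul (hθP i) hvu₁ (by linarith [huw.1, hwv.1]) (hp.le.trans (hθP i))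
        _ = θ ^ (k + 1) := (pow_succ' θ k).symm
    · calc _ = (rowPart T (j + 1) - rowPart T j) * (v.2 - u.2) := by simp only [omegaMap]; ring
        _ ≤ θ * θ ^ k := mul_le_mul (hθR j) hvu₂ (by linarith [huw.2, hwv.2]) (hq.le.trans (hθR j))
        _ = θ ^ (k + 1) := (pow_succ' θ k).symm
    · rw [QVol_omegaMap hP hR hfix i j hu hv]
      exact mul_ne_zero ht hvol

theorem iInter_iterate_hutchinson_subset_suppQ (hm : 2 ≤ m) (hQ : IsQuasiCopula Q)
    (hP : IsUnitPartition (colPart T) m) (hR : IsUnitPartition (rowPart T) m)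
    (hfix : IsTTrans T Q Q) :
    ⋂ k : ℕ, (hutchinson T)^[k] (Icc 0 1 ×ˢ Icc 0 1) ⊆ suppQ Q := by
  have : Nonempty (Fin m) := ⟨⟨0, by omega⟩⟩
  obtain ⟨i₀, hi₀⟩ := Finite.exists_max fun i : Fin m =>
    max (colPart T (i + 1) - colPart T i) (rowPart T (i + 1) - rowPart T i)
  have hθ : max (colPart T (i₀ + 1) - colPart T i₀) (rowPart T (i₀ + 1) - rowPart T i₀) < 1 :=
    max_lt (hP.succ_sub_lt_one hm i₀.2) (hR.succ_sub_lt_one hm i₀.2)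
  intro x hx
  have hx₀ : x ∈ Icc (0:ℝ) 1 ×ˢ Icc (0:ℝ) 1 := mem_iInter.1 hx 0
  by_contra hx'
  obtain ⟨ε, hnull, hε⟩ := (((notMem_suppQ_iff hx₀).1 hx').and self_mem_nhdsWithin).exists
  obtain ⟨k, hk⟩ := exists_pow_lt_of_lt_one hε hθ
  obtain ⟨u, hu, v, hv, hux, hxv, hvu₁, hvu₂, hvol⟩ :=
    exists_QVol_ne_zero_of_mem_iterate_hutchinson hQ hP hR hfix
      (fun i => (le_max_left _ _).trans (hi₀ i)) (fun j => (le_max_right _ _).trans (hi₀ j)) k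
      (mem_iInter.1 hx k)
  have hnear : ∀ {a b c : ℝ}, a ≤ b → b ≤ c → c - a < ε → a ∈ ball b ε ∧ c ∈ ball b ε :=
    fun hab hbc hca => by
      simp only [mem_ball, Real.dist_eq, abs_sub_lt_iff]
      constructor <;> constructor <;> linarith
  exact hvol (hnull _ ⟨(hnear hux.1 hxv.1 (hvu₁.trans_lt hk)).1, hu.1⟩
    _ ⟨(hnear hux.1 hxv.1 (hvu₁.trans_lt hk)).2, hv.1⟩
    _ ⟨(hnear hux.2 hxv.2 (hvu₂.trans_lt hk)).1, hu.2⟩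
    _ ⟨(hnear hux.2 hxv.2 (hvu₂.trans_lt hk)).2, hv.2⟩)

end Hutchinson

theorem support_of_qtFixedPoint_is_invariant_set_general
    {m : ℕ} (hm : 2 ≤ m) (T : Fin m → Fin m → ℝ) (hT : IsQTMatrix T)
    (Q : ℝ → ℝ → ℝ) (hQ : IsQuasiCopula Q) (hfix : IsTTrans T Q Q) :
    (suppQ Q).Nonempty ∧ IsCompact (suppQ Q) ∧
    (suppQ Q = ⋃ i, ⋃ j, ⋃ (_ : T i j ≠ 0), omegaMap T i j '' suppQ Q) ∧
    (suppQ Q = ⋂ k : ℕ,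
      (fun A : Set (ℝ × ℝ) => ⋃ i, ⋃ j, ⋃ (_ : T i j ≠ 0), omegaMap T i j '' A)^[k]
        (Icc (0:ℝ) 1 ×ˢ Icc (0:ℝ) 1)) := by
  obtain ⟨h1, h2, h3, -⟩ := hT
  have hP := isUnitPartition_colPart h1 h2
  have hR := isUnitPartition_rowPart h1 h3
  have hself : suppQ Q = hutchinson T (suppQ Q) :=
    (suppQ_subset_hutchinson hP hR hfix).antisymm (hutchinson_suppQ_subset hP hR hfix)
  set K : ℕ → Set (ℝ × ℝ) := fun k => (hutchinson T)^[k] (Icc 0 1 ×ˢ Icc 0 1)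
  have hK_anti : Antitone K :=
    hutchinson_mono.antitone_iterate_of_map_le (hutchinson_unitSquare_subset hP hR)
  have hK_compact (k : ℕ) : IsCompact (K k) :=
    Function.Iterate.rec IsCompact (isCompact_Icc.prod isCompact_Icc) (fun _ h => h.hutchinson) k
  have hK_nonempty (k : ℕ) : (K k).Nonempty :=
    Function.Iterate.rec Set.Nonempty ⟨(0, 0), by simp⟩ (fun _ h => h.hutchinson h1) k
  have hinter : suppQ Q = ⋂ k, K k := by
    refine (subset_iInter fun k => ?_).antisymm
      (iInter_iterate_hutchinson_subset_suppQ hm hQ hP hR hfix)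
    rw [← Function.iterate_fixed hself.symm k]
    exact hutchinson_mono.iterate k fun x hx => hx.1
  refine ⟨hinter ▸ ?_, hinter ▸ ?_, hself, hinter⟩
  · exact IsCompact.nonempty_iInter_of_sequence_nonempty_isCompact_isClosed K
      (fun k => hK_anti k.le_succ) hK_nonempty (hK_compact 0) fun k => (hK_compact k).isClosed
  · exact (hK_compact 0).of_isClosed_subset (isClosed_iInter fun k => (hK_compact k).isClosed)
      (iInter_subset K 0)

/-- For a proper quasi-transformation matrix `T` of order `m ≥ 2` and the
quasi-copula `Q_T` with `T(Q_T) = Q_T`, the support of `Q_T` is the (nonempty compact)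
invariant set of the IFS `{[0,1]²; (ω_{ij})_{t_{ij} ≠ 0}}`. -/
theorem support_of_qtFixedPoint_is_invariant_set
    {m : ℕ} (hm : 2 ≤ m) (T : Fin m → Fin m → ℝ) (hT : IsQTMatrix T)
    (hproper : ∃ i j, T i j < 0)
    (Q : ℝ → ℝ → ℝ) (hQ : IsQuasiCopula Q) (hfix : IsTTrans T Q Q) :
    (suppQ Q).Nonempty ∧ IsCompact (suppQ Q) ∧
    (suppQ Q = ⋃ i, ⋃ j, ⋃ (_ : T i j ≠ 0), omegaMap T i j '' suppQ Q) ∧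
    (suppQ Q = ⋂ k : ℕ,
      (fun A : Set (ℝ × ℝ) => ⋃ i, ⋃ j, ⋃ (_ : T i j ≠ 0), omegaMap T i j '' A)^[k]
        (Icc (0:ℝ) 1 ×ˢ Icc (0:ℝ) 1)) :=
  support_of_qtFixedPoint_is_invariant_set_general hm T hT Q hQ hfix
end

section
/- For every r ∈ (0,1) there is a unique s ∈ (1,2) such that (1−r)^s + 9(r/3)^s = 1, and the resulting function s : (0,1) → (1,2) is strictly increasing and a bijection from (0,1) onto (1,2). -/
/-!
For fixed `r`, the map `s ↦ f(r,s)` is strictly decreasing, from `f(r,1) = 1 + 2r` to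
`f(r,2) = 1 - 2r + 2r²`, so it takes the value `1` exactly once on `(1,2)`.
For fixed `s > 1`, the map `r ↦ f(r,s)` is strictly convex on `[0,1]` with `f(0,s) = 1`; hence
once it reaches `1` at some `r₁ > 0` it stays above `1` on `(r₁,1]`, which forces the root to
increase with `r`. For surjectivity, given `t ∈ (1,2)`, the term `9(r/3)^t` is `o(r)` at `0`, so
`f(r,t) < 1` for small `r`, while `f(1,t) = 9 · 3^(-t) > 1`; the intermediate value theorem gives
an `r` with root `t`.
-/

open Set Filter Topology

/-- `moranSum r s = 1` is Moran's equation for one similarity of ratio `1 - r` and nine of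
ratio `r / 3`. -/
noncomputable def moranSum (r s : ℝ) : ℝ := (1 - r) ^ s + 9 * (r / 3) ^ s

section

variable {r s : ℝ}

lemma strictAnti_moranSum (hr₀ : 0 < r) (hr₁ : r < 1) : StrictAnti (moranSum r) :=
  (Real.strictAnti_rpow_of_base_lt_one (by linarith) (by linarith)).add
    ((Real.strictAnti_rpow_of_base_lt_one (by linarith) (by linarith)).const_mul (by norm_num))

lemma continuous_moranSum_right (hr₀ : 0 < r) (hr₁ : r < 1) : Continuous (moranSum r) :=
  (continuous_const.rpow continuous_id fun _ ↦ Or.inl (by linarith)).add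
    (continuous_const.mul (continuous_const.rpow continuous_id fun _ ↦ Or.inl (by positivity)))

lemma continuous_moranSum_left (hs : 0 ≤ s) : Continuous (moranSum · s) :=
  ((continuous_const.sub continuous_id).rpow_const fun _ ↦ Or.inr hs).add
    (continuous_const.mul ((continuous_id.div_const 3).rpow_const fun _ ↦ Or.inr hs))

lemma moranSum_one_right (r : ℝ) : moranSum r 1 = 1 + 2 * r := by
  simp only [moranSum, Real.rpow_one]; ring

lemma moranSum_two_right (r : ℝ) : moranSum r 2 = 1 - 2 * r + 2 * r ^ 2 := by
  simp only [moranSum, Real.rpow_two]; ring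

lemma existsUnique_moranSum_eq_one (hr₀ : 0 < r) (hr₁ : r < 1) :
    ∃! s, s ∈ Ioo (1 : ℝ) 2 ∧ moranSum r s = 1 := by
  have h : (1 : ℝ) ∈ Ioo (moranSum r 2) (moranSum r 1) := by
    rw [moranSum_one_right, moranSum_two_right]
    constructor <;> nlinarith
  obtain ⟨s, hs, hs_eq⟩ := intermediate_value_Ioo' one_le_two
    (continuous_moranSum_right hr₀ hr₁).continuousOn h
  exact ⟨s, ⟨hs, hs_eq⟩, fun t ⟨_, ht_eq⟩ ↦ (strictAnti_moranSum hr₀ hr₁).injective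
    (ht_eq.trans hs_eq.symm)⟩

-- The right-hand side is the chord of `moranSum · s` from `(0, moranSum 0 s) = (0, 1)`.
lemma moranSum_lt_chord {r₁ r₂ : ℝ} (hr₁ : 0 < r₁) (h : r₁ < r₂) (hr₂ : r₂ ≤ 1) (hs : 1 < s) :
    moranSum r₁ s < (1 - r₁ / r₂) + r₁ / r₂ * moranSum r₂ s := by
  set a := r₁ / r₂
  have hr₂₀ : 0 < r₂ := hr₁.trans h
  have ha₀ : 0 < a := div_pos hr₁ hr₂₀
  have ha₁ : a < 1 := (div_lt_one hr₂₀).2 h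
  have hr₁_eq : r₁ = a * r₂ := (div_mul_cancel₀ r₁ hr₂₀.ne').symm
  have h_first : (1 - r₁) ^ s ≤ (1 - a) + a * (1 - r₂) ^ s := by
    have := (convexOn_rpow hs.le).2 (mem_Ici.2 zero_le_one) (mem_Ici.2 (sub_nonneg.2 hr₂))
      (sub_nonneg.2 ha₁.le) ha₀.le (sub_add_cancel 1 a)
    simp only [smul_eq_mul, Real.one_rpow, mul_one] at this
    rwa [show 1 - r₁ = (1 - a) + a * (1 - r₂) by rw [hr₁_eq]; ring]
  have h_second : (r₁ / 3) ^ s < a * (r₂ / 3) ^ s := by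
    rw [hr₁_eq, mul_div_assoc, Real.mul_rpow ha₀.le (by positivity)]
    exact mul_lt_mul_of_pos_right (Real.rpow_lt_self_of_lt_one ha₀ ha₁ hs) (by positivity)
  unfold moranSum
  linarith

lemma one_lt_moranSum_of_lt {r₁ r₂ : ℝ} (hr₁ : 0 < r₁) (h : r₁ < r₂) (hr₂ : r₂ ≤ 1)
    (hs : 1 < s) (h_one : 1 ≤ moranSum r₁ s) : 1 < moranSum r₂ s := by
  have ha₀ : 0 < r₁ / r₂ := div_pos hr₁ (hr₁.trans h)
  have := moranSum_lt_chord hr₁ h hr₂ hs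
  nlinarith

lemma exists_moranSum_lt_one (hs : 1 < s) : ∃ r ∈ Ioo (0 : ℝ) 1, moranSum r s < 1 := by
  have h_small : ∀ᶠ r in 𝓝[>] (0 : ℝ), (r / 3) ^ (s - 1) < 1 / 3 := by
    have h_cont : Continuous fun r : ℝ ↦ (r / 3) ^ (s - 1) :=
      (continuous_id.div_const 3).rpow_const fun _ ↦ Or.inr (sub_nonneg.2 hs.le)
    have h_lim : Tendsto (fun r : ℝ ↦ (r / 3) ^ (s - 1)) (𝓝 0) (𝓝 0) := by
      simpa [Real.zero_rpow (sub_pos.2 hs).ne'] using h_cont.tendsto 0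
    exact (h_lim.eventually (gt_mem_nhds (by norm_num))).filter_mono nhdsWithin_le_nhds
  obtain ⟨r, h_small, hr₀, hr₁⟩ := (h_small.and (Ioo_mem_nhdsGT one_pos)).exists
  refine ⟨r, ⟨hr₀, hr₁⟩, ?_⟩
  have h_first : (1 - r) ^ s < 1 - r :=
    Real.rpow_lt_self_of_lt_one (by linarith) (by linarith) hs
  have h_second : 9 * (r / 3) ^ s < r := by
    rw [← div_mul_cancel₀ ((r / 3) ^ s) (by positivity : r / 3 ≠ 0),
      ← Real.rpow_sub_one (by positivity)]
    nlinarith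
  unfold moranSum
  linarith

lemma one_lt_moranSum_one_left (hs₀ : 0 < s) (hs₂ : s < 2) : 1 < moranSum 1 s := by
  have h := Real.rpow_lt_rpow_of_exponent_gt (by norm_num : (0 : ℝ) < 1 / 3) (by norm_num) hs₂
  rw [Real.rpow_two] at h
  simp only [moranSum, sub_self, Real.zero_rpow hs₀.ne']
  linarith

lemma exists_moranSum_eq_one (hs₁ : 1 < s) (hs₂ : s < 2) :
    ∃ r ∈ Ioo (0 : ℝ) 1, moranSum r s = 1 := by
  obtain ⟨r₀, hr₀, h_lt⟩ := exists_moranSum_lt_one hs₁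
  obtain ⟨r, hr, hr_eq⟩ := intermediate_value_Ioo hr₀.2.le
    (continuous_moranSum_left (by linarith)).continuousOn
    (show (1 : ℝ) ∈ Ioo (moranSum r₀ s) (moranSum 1 s) from
      ⟨h_lt, one_lt_moranSum_one_left (by linarith) hs₂⟩)
  exact ⟨r, ⟨hr₀.1.trans hr.1, hr.2⟩, hr_eq⟩

lemma strictMonoOn_of_moranSum_eq_one {S : ℝ → ℝ}
    (hS : ∀ r ∈ Ioo (0 : ℝ) 1, S r ∈ Ioo (1 : ℝ) 2 ∧ moranSum r (S r) = 1) :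
    StrictMonoOn S (Ioo 0 1) := by
  intro r₁ hr₁ r₂ hr₂ h
  obtain ⟨hS₁, h_eq₁⟩ := hS r₁ hr₁
  have h_gt : 1 < moranSum r₂ (S r₁) := one_lt_moranSum_of_lt hr₁.1 h hr₂.2.le hS₁.1 h_eq₁.ge
  rw [← (hS r₂ hr₂).2] at h_gt
  exact (strictAnti_moranSum hr₂.1 hr₂.2).lt_iff_gt.1 h_gt

end

/-- For every `r ∈ (0,1)` there is a unique `s ∈ (1,2)` with
`(1-r)^s + 9(r/3)^s = 1`, and the resulting function `s : (0,1) → (1,2)` is strictly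
increasing and a bijection from `(0,1)` onto `(1,2)`. -/
theorem unique_s_and_bijection :
    (∀ r ∈ Ioo (0:ℝ) 1,
      ∃! s : ℝ, s ∈ Ioo (1:ℝ) 2 ∧ (1 - r) ^ s + 9 * (r / 3) ^ s = 1) ∧
    ∀ S : ℝ → ℝ,
      (∀ r ∈ Ioo (0:ℝ) 1, S r ∈ Ioo (1:ℝ) 2 ∧ (1 - r) ^ (S r) + 9 * (r / 3) ^ (S r) = 1) →
      StrictMonoOn S (Ioo (0:ℝ) 1) ∧ Set.BijOn S (Ioo (0:ℝ) 1) (Ioo (1:ℝ) 2) := by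
  refine ⟨fun r hr ↦ existsUnique_moranSum_eq_one hr.1 hr.2, fun S hS ↦ ?_⟩
  have h_mono : StrictMonoOn S (Ioo 0 1) := strictMonoOn_of_moranSum_eq_one hS
  refine ⟨h_mono, fun r hr ↦ (hS r hr).1, h_mono.injOn, fun s hs ↦ ?_⟩
  obtain ⟨r, hr, hr_eq⟩ := exists_moranSum_eq_one hs.1 hs.2
  exact ⟨r, hr, (existsUnique_moranSum_eq_one hr.1 hr.2).unique (hS r hr) ⟨hs, hr_eq⟩⟩
end

section
/- For every natural number n ≥ 2 and every s ∈ (1,n) there exists r ∈ (0,1) such that (1−r)^s + 3^n (r/3)^s = 1. -/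
open Set

/-- For every natural `n ≥ 2` and every `s ∈ (1,n)` there exists
`r ∈ (0,1)` such that `(1-r)^s + 3^n (r/3)^s = 1`. -/
theorem exists_root_multidim (n : ℕ) (hn : 2 ≤ n) (s : ℝ) (hs : s ∈ Ioo (1:ℝ) (n:ℝ)) :
    ∃ r ∈ Ioo (0:ℝ) 1, (1 - r) ^ s + (3:ℝ) ^ n * (r / 3) ^ s = 1 := by
  obtain ⟨hs1, hsn⟩ := hs
  have hs0 : (0:ℝ) < s := by linarith
  have h3 : (1:ℝ) < 3 := by norm_num
  set c : ℝ := (3:ℝ) ^ ((s - n) / (s - 1)) with hc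
  have hc0 : 0 < c := Real.rpow_pos_of_pos (by norm_num) _
  have hexp_neg : (s - n) / (s - 1) < 0 :=
    div_neg_of_neg_of_pos (by linarith) (by linarith)
  have hc1 : c < 1 := Real.rpow_lt_one_of_one_lt_of_neg h3 hexp_neg
  set a : ℝ := c / 2 with ha
  have ha0 : 0 < a := by positivity
  have hac : a < c := by simp [ha]; linarith
  have ha1 : a < 1 := lt_trans hac hc1
  set f : ℝ → ℝ := fun r => (1 - r) ^ s + (3:ℝ) ^ n * (r / 3) ^ s with hf
  -- rewrite 3^n as rpow
  have h3n : ((3:ℝ) ^ n) = (3:ℝ) ^ ((n:ℝ)) := (Real.rpow_natCast 3 n).symm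
  have hkey : ∀ r : ℝ, 0 < r → (3:ℝ) ^ n * (r / 3) ^ s = (3:ℝ) ^ ((n:ℝ) - s) * r ^ s := by
    intro r hr
    rw [Real.div_rpow hr.le (by norm_num), h3n, Real.rpow_sub (by norm_num)]
    field_simp
  -- f a < 1
  have hfa : f a < 1 := by
    have h1 : (1 - a) ^ s ≤ 1 - a := by
      calc (1 - a) ^ s ≤ (1 - a) ^ (1:ℝ) :=
            Real.rpow_le_rpow_of_exponent_ge (by linarith) (by linarith) hs1.le
        _ = 1 - a := Real.rpow_one _
    have h2 : (3:ℝ) ^ n * (a / 3) ^ s < a := by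
      rw [hkey a ha0]
      have has : a ^ s = a ^ (s - 1) * a := by
        rw [← Real.rpow_add_one (ne_of_gt ha0)]
        ring_nf
      have hlt : a ^ (s - 1) < c ^ (s - 1) :=
        Real.rpow_lt_rpow ha0.le hac (by linarith)
      have hcs : c ^ (s - 1) = (3:ℝ) ^ (s - (n:ℝ)) := by
        rw [hc, ← Real.rpow_mul (by norm_num)]
        congr 1
        exact div_mul_cancel₀ _ (ne_of_gt (by linarith : (0:ℝ) < s - 1))
      have : (3:ℝ) ^ ((n:ℝ) - s) * a ^ (s - 1) < 1 := by
        calc (3:ℝ) ^ ((n:ℝ) - s) * a ^ (s - 1)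
            < (3:ℝ) ^ ((n:ℝ) - s) * (3:ℝ) ^ (s - (n:ℝ)) := by
              rw [← hcs]
              exact mul_lt_mul_of_pos_left hlt (Real.rpow_pos_of_pos (by norm_num) _)
          _ = 1 := by rw [← Real.rpow_add (by norm_num)]; norm_num
      calc (3:ℝ) ^ ((n:ℝ) - s) * a ^ s
          = ((3:ℝ) ^ ((n:ℝ) - s) * a ^ (s - 1)) * a := by rw [has]; ring
        _ < 1 * a := by exact mul_lt_mul_of_pos_right this ha0
        _ = a := one_mul a
    simp only [hf]
    linarith
  -- f 1 > 1
  have hf1 : 1 < f 1 := by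
    simp only [hf]
    rw [sub_self, Real.zero_rpow (by linarith), hkey 1 one_pos, Real.one_rpow, mul_one,
      zero_add]
    exact Real.one_lt_rpow_iff_of_pos (by norm_num) |>.2 (Or.inl ⟨h3, by linarith⟩)
  -- continuity
  have hcont : Continuous f := by
    apply Continuous.add
    · exact (continuous_const.sub continuous_id).rpow_const fun x => Or.inr hs0.le
    · exact continuous_const.mul
        ((continuous_id.div_const 3).rpow_const fun x => Or.inr hs0.le)
  have hsub := intermediate_value_Ioo (le_of_lt ha1) hcont.continuousOn
  have h1mem : (1:ℝ) ∈ Ioo (f a) (f 1) := ⟨hfa, hf1⟩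
  obtain ⟨r, hr, hfr⟩ := hsub h1mem
  exact ⟨r, ⟨lt_trans ha0 hr.1, hr.2⟩, hfr⟩
end

section
/- Let n ≥ 2, T ∈ T_Q and Q an n-quasi-copula. For every multi-index i and every u with a_{j,i_j−1} ≤ u_j ≤ a_{j,i_j} for all j, one has V_{T(Q)}([a_{1,i_1−1},u_1]×⋯×[a_{n,i_n−1},u_n]) = t_i · Q((u_1−a_{1,i_1−1})/(a_{1,i_1}−a_{1,i_1−1}), …, (u_n−a_{n,i_n−1})/(a_{n,i_n}−a_{n,i_n−1})). In particular, V_{T(Q)}(Π_j [a_{j,i_j−1}, a_{j,i_j}]) = t_i for every multi-index i. -/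
open Set MeasureTheory
open scoped ENNReal

noncomputable section

/-- An `n`-quasi-copula on `[0,1]ⁿ`. -/
def IsNQuasiCopula (n : ℕ) (Q : (Fin n → ℝ) → ℝ) : Prop :=
  (∀ u : Fin n → ℝ, (∀ j, u j ∈ Icc (0:ℝ) 1) → Q u ∈ Icc (0:ℝ) 1) ∧
  (∀ u : Fin n → ℝ, (∀ j, u j ∈ Icc (0:ℝ) 1) → (∃ j, u j = 0) → Q u = 0) ∧
  (∀ u : Fin n → ℝ, (∀ j, u j ∈ Icc (0:ℝ) 1) → ∀ k, (∀ j, j ≠ k → u j = 1) → Q u = u k) ∧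
  (∀ u v : Fin n → ℝ, (∀ j, u j ∈ Icc (0:ℝ) 1) → (∀ j, v j ∈ Icc (0:ℝ) 1) →
    (∀ j, u j ≤ v j) → Q u ≤ Q v) ∧
  (∀ u v : Fin n → ℝ, (∀ j, u j ∈ Icc (0:ℝ) 1) → (∀ j, v j ∈ Icc (0:ℝ) 1) →
    |Q u - Q v| ≤ ∑ j, |u j - v j|)

/-- The `Q`-volume of the `n`-box `Π_j [lo j, hi j]`: the standard alternating-sign sum of
`Q` over the vertices of the box. -/
def nVol (n : ℕ) (Q : (Fin n → ℝ) → ℝ) (lo hi : Fin n → ℝ) : ℝ :=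
  ∑ ε : Fin n → Bool,
    (-1 : ℝ) ^ (Finset.univ.filter fun j => ε j = false).card *
      Q (fun j => if ε j then hi j else lo j)

/-- An `n`-copula: an `n`-quasi-copula all of whose box volumes are nonnegative. -/
def IsNCopula (n : ℕ) (Q : (Fin n → ℝ) → ℝ) : Prop :=
  IsNQuasiCopula n Q ∧
  ∀ lo hi : Fin n → ℝ,
    (∀ j, lo j ∈ Icc (0:ℝ) 1 ∧ hi j ∈ Icc (0:ℝ) 1 ∧ lo j ≤ hi j) → 0 ≤ nVol n Q lo hi

/-- The divisions `0 = a_{j,0} < a_{j,1} < ⋯ < a_{j,m_j} = 1` of `[0,1]`. -/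
def IsDivision (n : ℕ) (m : Fin n → ℕ) (a : Fin n → ℕ → ℝ) : Prop :=
  (∀ j, 1 ≤ m j) ∧ (∀ j, a j 0 = 0) ∧ (∀ j, a j (m j) = 1) ∧
  (∀ j, ∀ k, k < m j → a j k < a j (k + 1))

/-- `T ∈ T_Q`: the array `t` consists of the `B`-volumes of the boxes of the division, for
some `n`-quasi-copula `B`.  (Multi-indices are zero-based: the box of index `i` is
`Π_j [a_{j, i j}, a_{j, i j + 1}]`.) -/
def MemTQ (n : ℕ) (m : Fin n → ℕ) (a : Fin n → ℕ → ℝ)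
    (t : ((j : Fin n) → Fin (m j)) → ℝ) : Prop :=
  ∃ B : (Fin n → ℝ) → ℝ, IsNQuasiCopula n B ∧
    ∀ i : (j : Fin n) → Fin (m j),
      t i = nVol n B (fun j => a j (i j : ℕ)) (fun j => a j ((i j : ℕ) + 1))

/-- The `T`-transformation `T(Q)(u) = Σ_i t_i · Q(r_i(u))`. -/
def TApp (n : ℕ) (m : Fin n → ℕ) (a : Fin n → ℕ → ℝ)
    (t : ((j : Fin n) → Fin (m j)) → ℝ) (Q : (Fin n → ℝ) → ℝ) : (Fin n → ℝ) → ℝ :=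
  fun u => ∑ i : (j : Fin n) → Fin (m j),
    t i * Q (fun j =>
      max (min ((u j - a j (i j : ℕ)) / (a j ((i j : ℕ) + 1) - a j (i j : ℕ))) 1) 0)

/-- `Σ_{r ≤ i} |t_r| − Σ_{r ≤ i'} |t_r|`, where `r ≤ i` means `r_h ≤ i_h` for all `h` and
`i'` is obtained from `i` by decreasing every coordinate by one (empty sums are `0`). -/
def alphaTerm (n : ℕ) (m : Fin n → ℕ) (t : ((j : Fin n) → Fin (m j)) → ℝ)
    (i : (j : Fin n) → Fin (m j)) : ℝ :=
  (∑ r ∈ Finset.univ.filter (fun r : (j : Fin n) → Fin (m j) => ∀ h, r h ≤ i h), |t r|) -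
  (∑ r ∈ Finset.univ.filter (fun r : (j : Fin n) → Fin (m j) =>
      ∀ h, (r h : ℕ) < (i h : ℕ)), |t r|)

/-- An open `Q`-null box: an `n`-box `Π_j I_j` with each `I_j` a relatively open interval
of `[0,1]`, such that every closed `n`-box contained in it has zero `Q`-volume. -/
def NOpenQNull (n : ℕ) (Q : (Fin n → ℝ) → ℝ) (B : Set (Fin n → ℝ)) : Prop :=
  (∃ I : Fin n → Set ℝ, B = Set.pi Set.univ I ∧
    ∀ j, (I j).OrdConnected ∧ ∃ U : Set ℝ, IsOpen U ∧ I j = U ∩ Icc 0 1) ∧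
  ∀ lo hi : Fin n → ℝ, (∀ j, lo j ≤ hi j) → Set.Icc lo hi ⊆ B → nVol n Q lo hi = 0

/-- The support of an `n`-quasi-copula: the complement in `[0,1]ⁿ` of the union of all
open `Q`-null boxes. -/
def suppNQ (n : ℕ) (Q : (Fin n → ℝ) → ℝ) : Set (Fin n → ℝ) :=
  {u | ∀ j, u j ∈ Icc (0:ℝ) 1} \ ⋃₀ {B | NOpenQNull n Q B}

/-- A similarity of `ℝⁿ` with ratio `c ∈ (0,1)` (Euclidean distance). -/
def IsSimilarityN (n : ℕ) (c : ℝ) (S : (Fin n → ℝ) → (Fin n → ℝ)) : Prop :=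
  0 < c ∧ c < 1 ∧ ∀ x y : Fin n → ℝ,
    Real.sqrt (∑ j, (S x j - S y j) ^ 2) = c * Real.sqrt (∑ j, (x j - y j) ^ 2)

/-- A self-similar subset of `ℝⁿ`. -/
def IsSelfSimilarN (n : ℕ) (E : Set (Fin n → ℝ)) : Prop :=
  ∃ (k : ℕ) (S : Fin (k + 1) → (Fin n → ℝ) → (Fin n → ℝ)) (c : Fin (k + 1) → ℝ),
    (∀ j, IsSimilarityN n (c j) (S j)) ∧ E = ⋃ j, S j '' E

end

section AuxForStatement12

private lemma clamp_mem (z : ℝ) : max (min z 1) 0 ∈ Set.Icc (0:ℝ) 1 :=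
  ⟨le_max_right _ _, max_le (le_trans (min_le_right _ _) le_rfl) zero_le_one⟩

private lemma clamp_one {z : ℝ} (h : 1 ≤ z) : max (min z 1) 0 = 1 := by
  rw [min_eq_right h]; exact max_eq_left zero_le_one

private lemma clamp_zero {z : ℝ} (h : z ≤ 0) : max (min z 1) 0 = 0 := by
  rw [min_eq_left (h.trans zero_le_one), max_eq_right h]

private lemma clamp_id {z : ℝ} (h0 : 0 ≤ z) (h1 : z ≤ 1) : max (min z 1) 0 = z := by
  rw [min_eq_left h1, max_eq_left h0]

private lemma sign_eq_prod {n : ℕ} (ε : Fin n → Bool) :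
    ((-1 : ℝ) ^ (Finset.univ.filter fun j => ε j = false).card)
      = ∏ j, (if ε j then (1:ℝ) else -1) := by
  rw [← Finset.prod_const, Finset.prod_filter]
  exact Finset.prod_congr rfl fun j _ => by cases h : ε j <;> simp [h]

private lemma sign_flip {n : ℕ} (ε : Fin n → Bool) (j₀ : Fin n) :
    ((-1:ℝ) ^ (Finset.univ.filter fun j => Function.update ε j₀ (!ε j₀) j = false).card)
      = -((-1:ℝ) ^ (Finset.univ.filter fun j => ε j = false).card) := by
  rw [sign_eq_prod, sign_eq_prod]
  have h1 : (fun j => if Function.update ε j₀ (!ε j₀) j then (1:ℝ) else -1)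
      = Function.update (fun j => if ε j then (1:ℝ) else -1) j₀
          (if !ε j₀ then (1:ℝ) else -1) := by
    funext j
    rcases eq_or_ne j j₀ with rfl | hj
    · simp
    · simp [Function.update_of_ne hj]
  rw [h1, Finset.prod_update_of_mem (Finset.mem_univ j₀),
    ← Finset.mul_prod_erase Finset.univ (fun j => if ε j then (1:ℝ) else -1)
      (Finset.mem_univ j₀)]
  cases h : ε j₀ <;>
    simp only [h, Bool.not_false, Bool.not_true, reduceIte, Bool.false_eq_true,
      Finset.sdiff_singleton_eq_erase] <;> ring

private lemma nVol_flip_zero {n : ℕ} (f : (Fin n → ℝ) → ℝ) (lo hi : Fin n → ℝ) (j₀ : Fin n)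
    (h : ∀ ε : Fin n → Bool,
      f (fun j => if Function.update ε j₀ (!ε j₀) j then hi j else lo j)
        = f (fun j => if ε j then hi j else lo j)) :
    nVol n f lo hi = 0 := by
  unfold nVol
  apply Finset.sum_ninvolution (fun ε => Function.update ε j₀ (!ε j₀))
  · intro ε
    rw [h ε, sign_flip]; ring
  · intro ε _ hc
    have := congrFun hc j₀
    simp at this
  · intro ε; exact Finset.mem_univ _
  · intro ε
    funext j
    rcases eq_or_ne j j₀ with rfl | hj
    · simp
    · simp [Function.update_of_ne hj]

private lemma nVol_sum {n : ℕ} {ι : Type*} [Fintype ι] (c : ι → ℝ) (f : ι → (Fin n → ℝ) → ℝ)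
    (lo hi : Fin n → ℝ) :
    nVol n (fun u => ∑ r, c r * f r u) lo hi = ∑ r, c r * nVol n (f r) lo hi := by
  unfold nVol
  simp only [Finset.mul_sum]
  rw [Finset.sum_comm]
  exact Finset.sum_congr rfl fun r _ => Finset.sum_congr rfl fun ε _ => by ring

private lemma nVol_vertex_zero {n : ℕ} (f : (Fin n → ℝ) → ℝ) (lo hi : Fin n → ℝ)
    (h : ∀ ε : Fin n → Bool, f (fun j => if ε j then hi j else lo j) = 0) :
    nVol n f lo hi = 0 := by
  unfold nVol
  simp only [h, mul_zero, Finset.sum_const_zero]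

private lemma nVol_eq_single {n : ℕ} (f : (Fin n → ℝ) → ℝ) (lo hi : Fin n → ℝ)
    (h0 : ∀ ε : Fin n → Bool, (∃ j, ε j = false) →
      f (fun j => if ε j then hi j else lo j) = 0) :
    nVol n f lo hi = f hi := by
  unfold nVol
  rw [Finset.sum_eq_single (fun _ => true)]
  · simp
  · intro ε _ hne
    have hex : ∃ j, ε j = false := by
      by_contra hc
      push_neg at hc
      apply hne; funext j
      have := hc j
      simpa using this
    rw [h0 ε hex, mul_zero]
  · intro h; exact absurd (Finset.mem_univ _) h

private lemma a_mono {n : ℕ} {m : Fin n → ℕ} {a : Fin n → ℕ → ℝ}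
    (hdiv : IsDivision n m a) (j : Fin n) {p q : ℕ} (hpq : p ≤ q) (hq : q ≤ m j) :
    a j p ≤ a j q := by
  induction q with
  | zero => simp [Nat.le_zero.mp hpq]
  | succ q ih =>
    rcases Nat.lt_or_ge p (q+1) with h | h
    · exact le_trans (ih (Nat.lt_succ_iff.mp h) (Nat.le_of_succ_le hq))
        (le_of_lt (hdiv.2.2.2 j q hq))
    · rw [le_antisymm hpq h]

end AuxForStatement12

/-- For `T ∈ T_Q` and an `n`-quasi-copula `Q`, for every multi-index `i`
and every `u` in the box of index `i`, the `T(Q)`-volume of `Π_j [a_{j,i_j−1}, u_j]` equals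
`t_i · Q` of the rescaled point; in particular the `T(Q)`-volume of the whole box is `t_i`. -/
theorem TApp_vol_on_boxes (n : ℕ) (hn : 2 ≤ n) (m : Fin n → ℕ) (a : Fin n → ℕ → ℝ)
    (hdiv : IsDivision n m a) (t : ((j : Fin n) → Fin (m j)) → ℝ)
    (hT : MemTQ n m a t) (Q : (Fin n → ℝ) → ℝ) (hQ : IsNQuasiCopula n Q) :
    (∀ i : (j : Fin n) → Fin (m j), ∀ u : Fin n → ℝ,
      (∀ j, u j ∈ Icc (a j (i j : ℕ)) (a j ((i j : ℕ) + 1))) →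
      nVol n (TApp n m a t Q) (fun j => a j (i j : ℕ)) u =
        t i * Q (fun j => (u j - a j (i j : ℕ)) / (a j ((i j : ℕ) + 1) - a j (i j : ℕ)))) ∧
    (∀ i : (j : Fin n) → Fin (m j),
      nVol n (TApp n m a t Q) (fun j => a j (i j : ℕ)) (fun j => a j ((i j : ℕ) + 1)) = t i) := by
  have key : ∀ i : (j : Fin n) → Fin (m j), ∀ u : Fin n → ℝ,
      (∀ j, u j ∈ Icc (a j (i j : ℕ)) (a j ((i j : ℕ) + 1))) →
      nVol n (TApp n m a t Q) (fun j => a j (i j : ℕ)) u =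
        t i * Q (fun j => (u j - a j (i j : ℕ)) / (a j ((i j : ℕ) + 1) - a j (i j : ℕ))) := by
    intro i u hu
    have hΔ : ∀ j : Fin n, 0 < a j ((i j : ℕ) + 1) - a j (i j : ℕ) :=
      fun j => sub_pos.mpr (hdiv.2.2.2 j _ (i j).2)
    have hx0 : ∀ j, 0 ≤ (u j - a j (i j : ℕ)) / (a j ((i j : ℕ) + 1) - a j (i j : ℕ)) :=
      fun j => div_nonneg (sub_nonneg.mpr (hu j).1) (le_of_lt (hΔ j))
    have hx1 : ∀ j, (u j - a j (i j : ℕ)) / (a j ((i j : ℕ) + 1) - a j (i j : ℕ)) ≤ 1 :=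
      fun j => (div_le_one (hΔ j)).mpr (by linarith [(hu j).2])
    have hlin : nVol n (TApp n m a t Q) (fun j => a j (i j : ℕ)) u
        = ∑ r : (j : Fin n) → Fin (m j), t r *
            nVol n (fun w => Q (fun j =>
              max (min ((w j - a j (r j : ℕ)) / (a j ((r j : ℕ) + 1) - a j (r j : ℕ))) 1) 0))
              (fun j => a j (i j : ℕ)) u :=
      nVol_sum t _ _ u
    rw [hlin, Finset.sum_eq_single i]
    · congr 1
      have h0 : ∀ ε : Fin n → Bool, (∃ j, ε j = false) →
          (fun w => Q (fun j =>
            max (min ((w j - a j (i j : ℕ)) / (a j ((i j : ℕ) + 1) - a j (i j : ℕ))) 1) 0))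
            (fun j => if ε j then u j else a j (i j : ℕ)) = 0 := by
        intro ε ⟨j₁, hj₁⟩
        apply hQ.2.1 _ (fun j => clamp_mem _)
        refine ⟨j₁, ?_⟩
        simp only [hj₁, if_false, Bool.false_eq_true]
        rw [sub_self, zero_div]
        exact clamp_zero le_rfl
      rw [nVol_eq_single _ _ _ h0]
      exact congrArg Q (funext fun j => clamp_id (hx0 j) (hx1 j))
    · intro r _ hri
      have hΔr : ∀ j : Fin n, 0 < a j ((r j : ℕ) + 1) - a j (r j : ℕ) :=
        fun j => sub_pos.mpr (hdiv.2.2.2 j _ (r j).2)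
      rcases Classical.em (∃ j, (i j : ℕ) < (r j : ℕ)) with ⟨j₁, hj₁⟩ | hle
      · rw [nVol_vertex_zero, mul_zero]
        intro ε
        apply hQ.2.1 _ (fun j => clamp_mem _)
        refine ⟨j₁, ?_⟩
        apply clamp_zero
        have hle2 : a j₁ ((i j₁ : ℕ) + 1) ≤ a j₁ (r j₁ : ℕ) :=
          a_mono hdiv j₁ hj₁ (le_of_lt (r j₁).2)
        have hnum : (if ε j₁ then u j₁ else a j₁ (i j₁ : ℕ)) - a j₁ (r j₁ : ℕ) ≤ 0 := by
          cases h : ε j₁ <;> simp only [h, if_true, if_false, Bool.false_eq_true] <;>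
            [skip; skip] <;> nlinarith [(hu j₁).2, hΔ j₁]
        exact div_nonpos_iff.mpr (Or.inr ⟨hnum, le_of_lt (hΔr j₁)⟩)
      · push_neg at hle
        have hex : ∃ j₀, (r j₀ : ℕ) < (i j₀ : ℕ) := by
          by_contra hc
          push_neg at hc
          apply hri
          funext j
          exact Fin.ext (le_antisymm (hle j) (hc j))
        obtain ⟨j₀, hj₀⟩ := hex
        rw [nVol_flip_zero _ _ _ j₀, mul_zero]
        intro ε
        have h1 : ∀ b : Bool, max (min (((if b then u j₀ else a j₀ (i j₀ : ℕ))
            - a j₀ (r j₀ : ℕ)) / (a j₀ ((r j₀ : ℕ) + 1) - a j₀ (r j₀ : ℕ))) 1) 0 = 1 := by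
          intro b
          apply clamp_one
          rw [one_le_div (hΔr j₀)]
          have hmono : a j₀ ((r j₀ : ℕ) + 1) ≤ a j₀ (i j₀ : ℕ) :=
            a_mono hdiv j₀ hj₀ (le_of_lt (i j₀).2)
          cases b <;> simp only [if_true, if_false, Bool.false_eq_true] <;>
            nlinarith [(hu j₀).1]
        congr 1
        funext j
        rcases eq_or_ne j j₀ with rfl | hj
        · simp only [Function.update_self]
          rw [h1 (!ε j), h1 (ε j)]
        · simp only [Function.update_of_ne hj]
    · intro h; exact absurd (Finset.mem_univ _) h
  refine ⟨key, fun i => ?_⟩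
  have hmem : ∀ j, a j ((i j : ℕ) + 1) ∈ Icc (a j (i j : ℕ)) (a j ((i j : ℕ) + 1)) :=
    fun j => ⟨le_of_lt (hdiv.2.2.2 j _ (i j).2), le_rfl⟩
  rw [key i _ hmem]
  have hone : Q (fun j => (a j ((i j : ℕ) + 1) - a j (i j : ℕ))
      / (a j ((i j : ℕ) + 1) - a j (i j : ℕ))) = 1 := by
    have h1 : (fun j => (a j ((i j : ℕ) + 1) - a j (i j : ℕ))
        / (a j ((i j : ℕ) + 1) - a j (i j : ℕ))) = fun _ : Fin n => (1 : ℝ) := by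
      funext j
      exact div_self (ne_of_gt (sub_pos.mpr (hdiv.2.2.2 j _ (i j).2)))
    rw [h1]
    have hk := hQ.2.2.1 (fun _ => (1 : ℝ)) (fun j => ⟨zero_le_one, le_rfl⟩)
      ⟨0, by omega⟩ (fun j _ => rfl)
    simpa using hk
  rw [hone, mul_one]
end

section
/- Let n ≥ 2, T = (t_i) ∈ T_Q, and let α = max_i (Σ_{r ≤ i} |t_r| − Σ_{r ≤ i'} |t_r|), where r ≤ i means r_h ≤ i_h for all h and i' = (i₁−1,…,i_n−1). Then for any two n-quasi-copulas Q₁, Q₂, d(T(Q₁), T(Q₂)) ≤ α · d(Q₁, Q₂), where d is the supremum metric. -/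
open Set MeasureTheory
open scoped ENNReal

/-!
Fix `u` and a grid cell `K` containing it. For an index `i` that is not `≤ K`, some coordinate
of `r_i(u)` is `0`; for `i` strictly below `K` in every coordinate, `r_i(u) = (1, …, 1)`. Two
quasi-copulas agree at both kinds of points, so in `T(Q₁)(u) - T(Q₂)(u)` only the indices
`i ≤ K` with some `i_h = K_h` survive, each contributing at most `|t_i| · d(Q₁, Q₂)`; their total
weight is the `K`-th term in the definition of `α`.
-/

theorem exists_lt_mem_Icc_apply_succ {α : Type*} [LinearOrder α] (f : ℕ → α) {x : α} {l : ℕ}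
    (hl : 1 ≤ l) (h0 : f 0 ≤ x) (hxl : x ≤ f l) : ∃ k < l, x ∈ Icc (f k) (f (k + 1)) := by
  induction l, hl using Nat.le_induction with
  | base => exact ⟨0, one_pos, h0, hxl⟩
  | succ l _ ih =>
    by_cases hfl : f l ≤ x
    · exact ⟨l, l.lt_succ_self, hfl, hxl⟩
    · obtain ⟨k, hk, hxk⟩ := ih (le_of_not_ge hfl)
      exact ⟨k, hk.trans l.lt_succ_self, hxk⟩

namespace IsDivision

variable {n : ℕ} {m : Fin n → ℕ} {a : Fin n → ℕ → ℝ}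

theorem strictMonoOn (hdiv : IsDivision n m a) (j : Fin n) :
    StrictMonoOn (a j) (Iic (m j)) :=
  strictMonoOn_Iic_of_lt_succ fun k hk => by simpa using hdiv.2.2.2 j k hk

theorem exists_cell (hdiv : IsDivision n m a) {u : Fin n → ℝ} (hu : ∀ j, u j ∈ Icc (0:ℝ) 1) :
    ∃ K : (j : Fin n) → Fin (m j), ∀ j, u j ∈ Icc (a j (K j)) (a j (K j + 1)) := by
  choose K hKlt hK using fun j => exists_lt_mem_Icc_apply_succ (a j) (x := u j) (hdiv.1 j)
    (by rw [hdiv.2.1 j]; exact (hu j).1) (by rw [hdiv.2.2.1 j]; exact (hu j).2)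
  exact ⟨fun j => ⟨K j, hKlt j⟩, hK⟩

end IsDivision

noncomputable def clampedRescale (lo hi x : ℝ) : ℝ :=
  max (min ((x - lo) / (hi - lo)) 1) 0

theorem clampedRescale_mem_Icc (lo hi x : ℝ) : clampedRescale lo hi x ∈ Icc (0:ℝ) 1 :=
  ⟨le_max_right _ _, max_le (min_le_right _ _) zero_le_one⟩

theorem clampedRescale_of_le {lo hi x : ℝ} (hlohi : lo ≤ hi) (hx : x ≤ lo) :
    clampedRescale lo hi x = 0 :=
  max_eq_right <| (min_le_left _ _).trans <|
    div_nonpos_of_nonpos_of_nonneg (sub_nonpos.2 hx) (sub_nonneg.2 hlohi)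

theorem clampedRescale_of_ge {lo hi x : ℝ} (hlohi : lo < hi) (hx : hi ≤ x) :
    clampedRescale lo hi x = 1 := by
  have : 1 ≤ (x - lo) / (hi - lo) := by rw [le_div_iff₀ (sub_pos.2 hlohi)]; linarith
  rw [clampedRescale, min_eq_right this, max_eq_left zero_le_one]

/-- `r_i(u)`, with zero-based multi-indices as in `TApp`. -/
noncomputable def cellRescale {n : ℕ} (m : Fin n → ℕ) (a : Fin n → ℕ → ℝ) (u : Fin n → ℝ)
    (i : (j : Fin n) → Fin (m j)) : Fin n → ℝ :=
  fun j => clampedRescale (a j (i j)) (a j (i j + 1)) (u j)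

theorem cellRescale_mem_Icc {n : ℕ} (m : Fin n → ℕ) (a : Fin n → ℕ → ℝ) (u : Fin n → ℝ)
    (i : (j : Fin n) → Fin (m j)) (j : Fin n) : cellRescale m a u i j ∈ Icc (0:ℝ) 1 :=
  clampedRescale_mem_Icc _ _ _

theorem TApp_sub_TApp (n : ℕ) (m : Fin n → ℕ) (a : Fin n → ℕ → ℝ)
    (t : ((j : Fin n) → Fin (m j)) → ℝ) (Q₁ Q₂ : (Fin n → ℝ) → ℝ) (u : Fin n → ℝ) :
    TApp n m a t Q₁ u - TApp n m a t Q₂ u =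
      ∑ i, t i * (Q₁ (cellRescale m a u i) - Q₂ (cellRescale m a u i)) := by
  simp only [TApp, ← Finset.sum_sub_distrib, mul_sub]
  rfl

section cell

variable {n : ℕ} {m : Fin n → ℕ} {a : Fin n → ℕ → ℝ} {u : Fin n → ℝ}
  {K : (j : Fin n) → Fin (m j)}

theorem exists_cellRescale_eq_zero_of_not_le (hdiv : IsDivision n m a)
    (hK : ∀ j, u j ≤ a j (K j + 1)) {i : (j : Fin n) → Fin (m j)} (hiK : ¬ i ≤ K) :
    ∃ j, cellRescale m a u i j = 0 := by
  obtain ⟨j, hj⟩ : ∃ j, K j < i j := by simpa [Pi.le_def] using hiK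
  refine ⟨j, clampedRescale_of_le (hdiv.2.2.2 j _ (i j).2).le ((hK j).trans ?_)⟩
  exact (hdiv.strictMonoOn j).monotoneOn (mem_Iic.2 (by omega)) (mem_Iic.2 (i j).2.le)
    (Nat.succ_le_of_lt hj)

theorem cellRescale_eq_one_of_lt (hdiv : IsDivision n m a)
    (hK : ∀ j, a j (K j) ≤ u j) {i : (j : Fin n) → Fin (m j)} (hiK : ∀ j, (i j : ℕ) < K j) :
    cellRescale m a u i = fun _ => 1 := by
  funext j
  refine clampedRescale_of_ge (hdiv.2.2.2 j _ (i j).2) (le_trans ?_ (hK j))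
  exact (hdiv.strictMonoOn j).monotoneOn (mem_Iic.2 (by omega)) (mem_Iic.2 (K j).2.le) (hiK j)

end cell

theorem abs_sum_mul_le_of_eq_zero_off_sdiff {ι : Type*} [Fintype ι] [DecidableEq ι]
    {A B : Finset ι} (hBA : B ⊆ A) (t f : ι → ℝ) {d : ℝ} (hf : ∀ i ∉ A \ B, f i = 0)
    (hd : ∀ i, |f i| ≤ d) :
    |∑ i, t i * f i| ≤ ((∑ i ∈ A, |t i|) - ∑ i ∈ B, |t i|) * d := by
  rw [← Finset.sum_subset (Finset.subset_univ (A \ B)) fun i _ hi => by rw [hf i hi, mul_zero]]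
  calc |∑ i ∈ A \ B, t i * f i| ≤ ∑ i ∈ A \ B, |t i| * d :=
        (Finset.abs_sum_le_sum_abs _ _).trans <| Finset.sum_le_sum fun i _ => by
          rw [abs_mul]; exact mul_le_mul_of_nonneg_left (hd i) (abs_nonneg _)
    _ = ((∑ i ∈ A, |t i|) - ∑ i ∈ B, |t i|) * d := by
        rw [← Finset.sum_mul, Finset.sum_sdiff_eq_sub hBA]

namespace IsNQuasiCopula

variable {n : ℕ} {Q Q₁ Q₂ : (Fin n → ℝ) → ℝ}

theorem apply_one [NeZero n] (hQ : IsNQuasiCopula n Q) : Q (fun _ => 1) = 1 :=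
  hQ.2.2.1 _ (fun _ => ⟨zero_le_one, le_rfl⟩) 0 fun _ _ => rfl

theorem abs_sub_le_sSup (hQ₁ : IsNQuasiCopula n Q₁) (hQ₂ : IsNQuasiCopula n Q₂)
    {v : Fin n → ℝ} (hv : ∀ j, v j ∈ Icc (0:ℝ) 1) :
    |Q₁ v - Q₂ v| ≤
      sSup {x : ℝ | ∃ v : Fin n → ℝ, (∀ j, v j ∈ Icc (0:ℝ) 1) ∧ x = |Q₁ v - Q₂ v|} := by
  refine le_csSup ⟨1, ?_⟩ ⟨v, hv, rfl⟩
  rintro _ ⟨w, hw, rfl⟩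
  obtain ⟨h₁, h₁'⟩ := hQ₁.1 w hw
  obtain ⟨h₂, h₂'⟩ := hQ₂.1 w hw
  exact abs_sub_le_of_nonneg_of_le h₁ h₁' h₂ h₂'

end IsNQuasiCopula

theorem TApp_contraction_general (n : ℕ) (hn : 2 ≤ n) (m : Fin n → ℕ) (a : Fin n → ℕ → ℝ)
    (hdiv : IsDivision n m a) (t : ((j : Fin n) → Fin (m j)) → ℝ)
    (α : ℝ)
    (hα : IsGreatest {x : ℝ | ∃ i : (j : Fin n) → Fin (m j), x = alphaTerm n m t i} α)
    (Q₁ Q₂ : (Fin n → ℝ) → ℝ) (hQ₁ : IsNQuasiCopula n Q₁) (hQ₂ : IsNQuasiCopula n Q₂) :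
    ∀ u : Fin n → ℝ, (∀ j, u j ∈ Icc (0:ℝ) 1) →
      |TApp n m a t Q₁ u - TApp n m a t Q₂ u| ≤
        α * sSup {x : ℝ | ∃ v : Fin n → ℝ, (∀ j, v j ∈ Icc (0:ℝ) 1) ∧ x = |Q₁ v - Q₂ v|} := by
  intro u hu
  have : NeZero n := ⟨by omega⟩
  obtain ⟨K, hK⟩ := hdiv.exists_cell hu
  have hd (i) : |Q₁ (cellRescale m a u i) - Q₂ (cellRescale m a u i)| ≤ _ :=
    hQ₁.abs_sub_le_sSup hQ₂ (cellRescale_mem_Icc m a u i)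
  set A := Finset.univ.filter fun i : (j : Fin n) → Fin (m j) => ∀ h, i h ≤ K h
  set B := Finset.univ.filter fun i : (j : Fin n) → Fin (m j) => ∀ h, (i h : ℕ) < K h
  have hBA : B ⊆ A := Finset.monotone_filter_right _ fun _ _ hi h => (hi h).le
  have hvanish : ∀ i ∉ A \ B, Q₁ (cellRescale m a u i) - Q₂ (cellRescale m a u i) = 0 := by
    intro i hi
    simp only [A, B, Finset.mem_sdiff, Finset.mem_filter, Finset.mem_univ, true_and, not_and,
      not_not] at hi
    by_cases hiK : i ≤ K
    · rw [cellRescale_eq_one_of_lt hdiv (fun j => (hK j).1) (hi hiK), hQ₁.apply_one,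
        hQ₂.apply_one, sub_self]
    · have h0 := exists_cellRescale_eq_zero_of_not_le hdiv (fun j => (hK j).2) hiK
      rw [hQ₁.2.1 _ (cellRescale_mem_Icc m a u i) h0, hQ₂.2.1 _ (cellRescale_mem_Icc m a u i) h0,
        sub_zero]
  rw [TApp_sub_TApp]
  calc _ ≤ alphaTerm n m t K * _ :=
        abs_sum_mul_le_of_eq_zero_off_sdiff hBA t _ hvanish hd
    _ ≤ _ := mul_le_mul_of_nonneg_right (hα.2 ⟨K, rfl⟩) ((abs_nonneg _).trans (hd K))

/-- For `T ∈ T_Q` and `α = max_i (Σ_{r ≤ i} |t_r| − Σ_{r ≤ i'} |t_r|)`,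
the `T`-transformation is `α`-Lipschitz for the sup metric:
`d(T(Q₁), T(Q₂)) ≤ α · d(Q₁, Q₂)` for all `n`-quasi-copulas `Q₁, Q₂`. -/
theorem TApp_contraction (n : ℕ) (hn : 2 ≤ n) (m : Fin n → ℕ) (a : Fin n → ℕ → ℝ)
    (hdiv : IsDivision n m a) (t : ((j : Fin n) → Fin (m j)) → ℝ)
    (hT : MemTQ n m a t) (α : ℝ)
    (hα : IsGreatest {x : ℝ | ∃ i : (j : Fin n) → Fin (m j), x = alphaTerm n m t i} α)
    (Q₁ Q₂ : (Fin n → ℝ) → ℝ) (hQ₁ : IsNQuasiCopula n Q₁) (hQ₂ : IsNQuasiCopula n Q₂) :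
    ∀ u : Fin n → ℝ, (∀ j, u j ∈ Icc (0:ℝ) 1) →
      |TApp n m a t Q₁ u - TApp n m a t Q₂ u| ≤
        α * sSup {x : ℝ | ∃ v : Fin n → ℝ, (∀ j, v j ∈ Icc (0:ℝ) 1) ∧ x = |Q₁ v - Q₂ v|} :=
  TApp_contraction_general n hn m a hdiv t α hα Q₁ Q₂ hQ₁ hQ₂
end
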